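/- arXiv:0805.3220 — 12 statements merged into one kernel-verified Lean document; each statement's English description precedes it below -/
import Mathlib

section
/- The function k(λ) = (1 − (λ+1)e^{−λ})^{1/2} / (1 − e^{−λ}) is strictly increasing on (0, ∞). -/
/-!
Write `k = √f` with `f(λ) = (1 - (λ+1)e^{-λ}) / (1 - e^{-λ})²`. A direct computation gives
`f'(λ) = e^{-λ} g(λ) / (1 - e^{-λ})³` with `g(λ) = λ - 2 + (λ+2)e^{-λ}`, and `g` is positive on
`(0, ∞)` because `g(0) = 0` and `g'(λ) = 1 - (λ+1)e^{-λ} > 0`, i.e. `e^λ > 1 + λ`.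
-/

open Real Set

lemma add_one_mul_exp_neg_lt_one {x : ℝ} (hx : x ≠ 0) : (x + 1) * exp (-x) < 1 := by
  have := mul_lt_mul_of_pos_right (add_one_lt_exp hx) (exp_pos (-x))
  rwa [← exp_add, add_neg_cancel, exp_zero] at this

lemma one_sub_exp_neg_pos {x : ℝ} (hx : 0 < x) : 0 < 1 - exp (-x) :=
  sub_pos.2 (exp_lt_one_iff.2 (neg_lt_zero.2 hx))

lemma hasDerivAt_sub_two_add_mul_exp_neg (x : ℝ) :
    HasDerivAt (fun y => y - 2 + (y + 2) * exp (-y)) (1 - (x + 1) * exp (-x)) x :=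
  (((hasDerivAt_id' x).sub_const 2).add
    (((hasDerivAt_id' x).add_const 2).fun_mul (hasDerivAt_neg x).exp)).congr_deriv (by ring)

lemma sub_two_add_mul_exp_neg_pos {x : ℝ} (hx : 0 < x) : 0 < x - 2 + (x + 2) * exp (-x) := by
  have hmono : StrictMonoOn (fun y => y - 2 + (y + 2) * exp (-y)) (Ici 0) := by
    refine strictMonoOn_of_hasDerivWithinAt_pos (convex_Ici 0) (by fun_prop)
      (fun y _ => (hasDerivAt_sub_two_add_mul_exp_neg y).hasDerivWithinAt) fun y hy => ?_
    rw [interior_Ici] at hy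
    exact sub_pos.2 (add_one_mul_exp_neg_lt_one (ne_of_gt hy))
  simpa using hmono self_mem_Ici hx.le hx

lemma hasDerivAt_one_sub_add_one_mul_exp_neg_div_sq {x : ℝ} (hx : x ≠ 0) :
    HasDerivAt (fun y => (1 - (y + 1) * exp (-y)) / (1 - exp (-y)) ^ 2)
      (exp (-x) * (x - 2 + (x + 2) * exp (-x)) / (1 - exp (-x)) ^ 3) x := by
  have hden : 1 - exp (-x) ≠ 0 := by
    rw [sub_ne_zero, ne_comm, Ne, exp_eq_one_iff, neg_eq_zero]
    exact hx
  have hexp := (hasDerivAt_neg x).exp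
  refine ((((hasDerivAt_id' x).add_const 1).fun_mul hexp).const_sub 1).div
    ((hexp.const_sub 1).fun_pow 2) (pow_ne_zero 2 hden) |>.congr_deriv ?_
  field_simp
  ring

lemma strictMonoOn_one_sub_add_one_mul_exp_neg_div_sq :
    StrictMonoOn (fun l => (1 - (l + 1) * exp (-l)) / (1 - exp (-l)) ^ 2) (Ioi 0) := by
  have hderiv (x : ℝ) (hx : x ∈ Ioi 0) :=
    hasDerivAt_one_sub_add_one_mul_exp_neg_div_sq (ne_of_gt hx)
  refine strictMonoOn_of_hasDerivWithinAt_pos (convex_Ioi 0)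
    (fun x hx => (hderiv x hx).continuousAt.continuousWithinAt)
    (fun x hx => (hderiv x (interior_subset hx)).hasDerivWithinAt) fun x hx => ?_
  rw [interior_Ioi] at hx
  have hg := sub_two_add_mul_exp_neg_pos hx
  have hden := one_sub_exp_neg_pos hx
  positivity

/-- The function `k(λ) = (1 − (λ+1)e^{−λ})^{1/2} / (1 − e^{−λ})` is strictly
increasing on `(0, ∞)`. -/
theorem k_strictMonoOn :
    StrictMonoOn
      (fun l : ℝ => Real.sqrt (1 - (l + 1) * Real.exp (-l)) / (1 - Real.exp (-l)))
      (Set.Ioi (0 : ℝ)) := by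
  have hnum {x : ℝ} (hx : x ∈ Ioi 0) : 0 ≤ 1 - (x + 1) * exp (-x) :=
    sub_nonneg.2 (add_one_mul_exp_neg_lt_one (ne_of_gt hx)).le
  refine (strictMonoOn_sqrt.comp strictMonoOn_one_sub_add_one_mul_exp_neg_div_sq
    fun x hx => div_nonneg (hnum hx) (sq_nonneg _)).congr fun x hx => ?_
  simp only [Function.comp, sqrt_div (hnum hx), sqrt_sq (one_sub_exp_neg_pos hx).le]
end

section
/- The infimum of k(λ) over λ ∈ (0,∞) equals 1/√2 and the supremum equals 1; more precisely, 1/√2 < k(λ) < 1 for all λ > 0, k(λ) → 1/√2 as λ → 0⁺, and k(λ) → 1 as λ → ∞. -/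
/-! With `E = e^{-λ}`, `N = 1 - (λ+1)E` and `D = 1 - E`, for `λ > 0` we have `k(λ) = √(N / D²)`.
The two bounds are `D² - N = E (E + λ - 1) > 0`, i.e. `e^{-λ} > 1 - λ`, and
`2N - D² = 2E (sinh λ - λ) > 0`. As `λ → ∞`, `N, D → 1`; as `λ → 0⁺`, L'Hôpital's rule gives
`N / D² → lim λE / (2DE) = 1/2`, since `D / λ → 1`. The extrema are then the two limits. -/

open Real Set Filter Topology

/-- `k(λ) = (1 − (λ+1)e^{−λ})^{1/2} / (1 − e^{−λ})`. -/
noncomputable def kfun (l : ℝ) : ℝ :=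
  Real.sqrt (1 - (l + 1) * Real.exp (-l)) / (1 - Real.exp (-l))

section ExtremaOfImage

variable {α β : Type*} [ConditionallyCompleteLinearOrder β] [TopologicalSpace β]
  [OrderClosedTopology β] {f : α → β} {s : Set α} {l : Filter α} [l.NeBot] {a : β}

theorem csInf_image_eq_of_tendsto (hs : s ∈ l) (hle : ∀ x ∈ s, a ≤ f x)
    (h : Tendsto f l (𝓝 a)) : sInf (f '' s) = a := by
  refine IsGLB.csInf_eq ⟨?_, fun b hb => ge_of_tendsto h ?_⟩ ((Filter.nonempty_of_mem hs).image f)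
  · rintro _ ⟨x, hx, rfl⟩
    exact hle x hx
  · filter_upwards [hs] with x hx using hb ⟨x, hx, rfl⟩

theorem csSup_image_eq_of_tendsto (hs : s ∈ l) (hle : ∀ x ∈ s, f x ≤ a)
    (h : Tendsto f l (𝓝 a)) : sSup (f '' s) = a :=
  csInf_image_eq_of_tendsto (β := βᵒᵈ) hs hle h

end ExtremaOfImage

theorem one_sub_exp_neg_pos_s1 {l : ℝ} (hl : 0 < l) : 0 < 1 - exp (-l) :=
  sub_pos.2 (exp_lt_one_iff.2 (neg_lt_zero.2 hl))

theorem one_sub_add_one_mul_exp_neg_lt_sq {l : ℝ} (hl : l ≠ 0) :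
    1 - (l + 1) * exp (-l) < (1 - exp (-l)) ^ 2 := by
  have h : -l + 1 < exp (-l) := add_one_lt_exp (neg_ne_zero.2 hl)
  nlinarith [mul_pos (exp_pos (-l)) (sub_pos.2 h)]

theorem sq_one_sub_exp_neg_lt_two_mul {l : ℝ} (hl : 0 < l) :
    (1 - exp (-l)) ^ 2 < 2 * (1 - (l + 1) * exp (-l)) := by
  have h : l < sinh l := self_lt_sinh_iff.2 hl
  have hexp : exp l * exp (-l) = 1 := by rw [← exp_add, add_neg_cancel, exp_zero]
  rw [sinh_eq] at h
  nlinarith [mul_pos (exp_pos (-l)) (sub_pos.2 h)]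

theorem kfun_eq_sqrt {l : ℝ} (hl : 0 ≤ l) :
    kfun l = √((1 - (l + 1) * exp (-l)) / (1 - exp (-l)) ^ 2) := by
  have hD : 0 ≤ 1 - exp (-l) := sub_nonneg.2 (exp_le_one_iff.2 (neg_nonpos.2 hl))
  rw [kfun, sqrt_div' _ (sq_nonneg _), sqrt_sq hD]

theorem one_div_sqrt_two_lt_kfun {l : ℝ} (hl : 0 < l) : 1 / √2 < kfun l := by
  rw [kfun_eq_sqrt hl.le, one_div, ← sqrt_inv]
  refine sqrt_lt_sqrt (by norm_num) ?_
  rw [lt_div_iff₀ (pow_pos (one_sub_exp_neg_pos_s1 hl) 2)]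
  linarith [sq_one_sub_exp_neg_lt_two_mul hl]

theorem kfun_lt_one {l : ℝ} (hl : 0 < l) : kfun l < 1 := by
  rw [kfun_eq_sqrt hl.le, sqrt_lt' one_pos, one_pow,
    div_lt_one (pow_pos (one_sub_exp_neg_pos_s1 hl) 2)]
  exact one_sub_add_one_mul_exp_neg_lt_sq hl.ne'

theorem hasDerivAt_one_sub_exp_neg (x : ℝ) :
    HasDerivAt (fun x : ℝ => 1 - exp (-x)) (exp (-x)) x := by
  simpa using ((hasDerivAt_neg x).exp).const_sub 1

theorem tendsto_one_sub_exp_neg_div_self :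
    Tendsto (fun x : ℝ => (1 - exp (-x)) / x) (𝓝[≠] 0) (𝓝 1) := by
  have h := hasDerivAt_iff_tendsto_slope.1 (hasDerivAt_one_sub_exp_neg 0)
  simp only [neg_zero, exp_zero] at h
  refine h.congr fun x => ?_
  simp [slope_def_field]

theorem tendsto_div_sq_one_sub_exp_neg_nhdsGT_zero :
    Tendsto (fun x : ℝ => (1 - (x + 1) * exp (-x)) / (1 - exp (-x)) ^ 2) (𝓝[>] 0) (𝓝 (1 / 2)) := by
  have hN (x : ℝ) : HasDerivAt (fun x : ℝ => 1 - (x + 1) * exp (-x)) (x * exp (-x)) x :=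
    ((((hasDerivAt_id x).add_const 1).mul (hasDerivAt_neg x).exp).const_sub 1).congr_deriv
      (by simp; ring)
  have hD (x : ℝ) : HasDerivAt (fun x : ℝ => (1 - exp (-x)) ^ 2)
      (2 * (1 - exp (-x)) * exp (-x)) x :=
    ((hasDerivAt_one_sub_exp_neg x).pow 2).congr_deriv (by norm_num)
  have hratio : Tendsto (fun x : ℝ => x * exp (-x) / (2 * (1 - exp (-x)) * exp (-x)))
      (𝓝[>] 0) (𝓝 (1 / 2)) := by
    have h := ((tendsto_one_sub_exp_neg_div_self.mono_left
      (nhdsWithin_mono 0 fun _ hx => ne_of_gt hx)).const_mul 2).inv₀ (by norm_num)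
    norm_num at h
    refine h.congr' ?_
    filter_upwards [self_mem_nhdsWithin] with x hx
    have := (one_sub_exp_neg_pos_s1 hx).ne'
    field_simp
  refine HasDerivAt.lhopital_zero_right_on_Ioo one_pos (fun x _ => hN x) (fun x _ => hD x)
    (fun x hx => ?_) ?_ ?_ hratio
  · have := one_sub_exp_neg_pos_s1 hx.1
    positivity
  all_goals
    refine tendsto_nhdsWithin_of_tendsto_nhds (Continuous.tendsto' (by fun_prop) _ _ ?_)
    simp

theorem tendsto_kfun_nhdsGT_zero : Tendsto kfun (𝓝[>] 0) (𝓝 (1 / √2)) := by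
  rw [one_div, ← sqrt_inv, ← one_div]
  refine tendsto_div_sq_one_sub_exp_neg_nhdsGT_zero.sqrt.congr' ?_
  filter_upwards [self_mem_nhdsWithin] with x hx
  exact (kfun_eq_sqrt hx.le).symm

theorem tendsto_kfun_atTop : Tendsto kfun atTop (𝓝 1) := by
  have hE : Tendsto (fun x : ℝ => exp (-x)) atTop (𝓝 0) := tendsto_exp_neg_atTop_nhds_zero
  have hxE : Tendsto (fun x : ℝ => x * exp (-x)) atTop (𝓝 0) := by
    simpa using tendsto_pow_mul_exp_neg_atTop_nhds_zero 1
  have hN : Tendsto (fun x : ℝ => 1 - (x + 1) * exp (-x)) atTop (𝓝 1) := by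
    simpa [add_mul] using (tendsto_const_nhds (x := (1 : ℝ))).sub (hxE.add hE)
  have hD : Tendsto (fun x : ℝ => 1 - exp (-x)) atTop (𝓝 1) := by
    simpa using (tendsto_const_nhds (x := (1 : ℝ))).sub hE
  have h := hN.sqrt.div hD one_ne_zero
  rwa [sqrt_one, div_one] at h

/-- The infimum of `k` over `(0,∞)` is `1/√2` and the supremum is `1`;
more precisely `1/√2 < k(λ) < 1` for all `λ > 0`, `k(λ) → 1/√2` as `λ → 0⁺`,
and `k(λ) → 1` as `λ → ∞`. -/
theorem kfun_inf_sup :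
    (∀ l : ℝ, 0 < l → 1 / Real.sqrt 2 < kfun l ∧ kfun l < 1) ∧
    sInf (kfun '' Set.Ioi 0) = 1 / Real.sqrt 2 ∧
    sSup (kfun '' Set.Ioi 0) = 1 ∧
    Filter.Tendsto kfun (nhdsWithin 0 (Set.Ioi 0)) (nhds (1 / Real.sqrt 2)) ∧
    Filter.Tendsto kfun Filter.atTop (nhds 1) :=
  ⟨fun _ hl => ⟨one_div_sqrt_two_lt_kfun hl, kfun_lt_one hl⟩,
    csInf_image_eq_of_tendsto self_mem_nhdsWithin (fun _ hl => (one_div_sqrt_two_lt_kfun hl).le)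
      tendsto_kfun_nhdsGT_zero,
    csSup_image_eq_of_tendsto (Ioi_mem_atTop 0) (fun _ hl => (kfun_lt_one hl).le)
      tendsto_kfun_atTop,
    tendsto_kfun_nhdsGT_zero, tendsto_kfun_atTop⟩
end

section
/- For every λ > 0 and every p* with e^{−λ} < p* < 1, the off-diagonal entry of the Fisher information matrix of the reparameterized ZIP model in the parameters (p*, λ) vanishes: Σ_{x=0}^∞ f₁*(x|λ,p*) · (∂/∂p* log f₁*(x|λ,p*)) · (∂/∂λ log f₁*(x|λ,p*)) = 0. That is, p* and λ are orthogonal parameters. -/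
/-!
For `x ≥ 1` we have `f₁*(x) = (1 − p*) f^T(x|λ)`, so the `p*`-score is the constant `−1/(1 − p*)`
there, while at `x = 0` the `λ`-score vanishes because `f₁*(0) = p*`. The cross term is therefore
`−Σₓ f^T(x|λ) · ∂_λ log f^T(x|λ)`, minus the mean of the score of the truncated Poisson law,
which is zero: `∂_λ log f^T(x|λ) = x/λ − 1/(1 − e^{−λ})` and the truncated mean is `λ/(1 − e^{−λ})`.
-/

/-- The zero-truncated Poisson probability function:
`f^T(x|λ) = e^{−λ}λ^x/(x!(1−e^{−λ}))` for `x ≥ 1`, and `f^T(0|λ) = 0`. -/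
noncomputable def truncPoisson (l : ℝ) (x : ℕ) : ℝ :=
  if x = 0 then 0
  else Real.exp (-l) * l ^ x / ((Nat.factorial x : ℝ) * (1 - Real.exp (-l)))

/-- The reparameterized zero-inflated Poisson probability function
`f₁*(x|λ,p*) = p*·1{x=0} + (1−p*)·f^T(x|λ)`. -/
noncomputable def zipStar (l p : ℝ) (x : ℕ) : ℝ :=
  (if x = 0 then p else 0) + (1 - p) * truncPoisson l x

open Real Filter
open scoped Nat Topology

lemma hasSum_natCast_mul_pow_div_factorial (l : ℝ) :
    HasSum (fun n : ℕ => n * l ^ n / n !) (l * exp l) := by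
  refine (hasSum_nat_add_iff' 1).mp ?_
  have h := (NormedSpace.expSeries_div_hasSum_exp l).mul_left l
  rw [← exp_eq_exp_ℝ] at h
  simp only [Finset.sum_range_one, CharP.cast_eq_zero, zero_mul, zero_div, sub_zero]
  refine h.congr_fun fun n => ?_
  rw [Nat.factorial_succ]
  push_cast
  field_simp
  ring

lemma truncPoisson_eq_mul (l : ℝ) (x : ℕ) :
    truncPoisson l x =
      ((l ^ x / x !) - if x = 0 then 1 else 0) * (exp (-l) / (1 - exp (-l))) := by
  rcases eq_or_ne x 0 with rfl | hx
  · simp [truncPoisson]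
  · rw [truncPoisson, if_neg hx, if_neg hx, sub_zero, div_mul_div_comm, mul_comm (exp (-l))]

lemma one_sub_exp_neg_ne_zero {l : ℝ} (hl : l ≠ 0) : 1 - exp (-l) ≠ 0 := by
  rw [sub_ne_zero, ne_comm, Ne, exp_eq_one_iff, neg_eq_zero]
  exact hl

lemma hasSum_truncPoisson {l : ℝ} (hl : l ≠ 0) : HasSum (truncPoisson l) 1 := by
  have h := ((NormedSpace.expSeries_div_hasSum_exp l).sub (hasSum_ite_eq 0 (1 : ℝ))).mul_right
    (exp (-l) / (1 - exp (-l)))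
  rw [← exp_eq_exp_ℝ, sub_mul, ← mul_div_assoc, ← exp_add, add_neg_cancel, exp_zero,
    one_mul, ← sub_div, div_self (one_sub_exp_neg_ne_zero hl)] at h
  exact h.congr_fun (truncPoisson_eq_mul l)

lemma hasSum_natCast_mul_truncPoisson (l : ℝ) :
    HasSum (fun x : ℕ => x * truncPoisson l x) (l / (1 - exp (-l))) := by
  have h := (hasSum_natCast_mul_pow_div_factorial l).mul_right (exp (-l) / (1 - exp (-l)))
  rw [mul_assoc, ← mul_div_assoc, ← exp_add, add_neg_cancel, exp_zero, mul_one_div] at h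
  refine h.congr_fun fun x => ?_
  rw [truncPoisson_eq_mul]
  rcases eq_or_ne x 0 with rfl | hx
  · simp
  · rw [if_neg hx, sub_zero]
    ring

noncomputable def truncPoissonScore (l : ℝ) (x : ℕ) : ℝ := x / l - 1 / (1 - exp (-l))

lemma hasSum_truncPoisson_mul_score {l : ℝ} (hl : l ≠ 0) :
    HasSum (fun x => truncPoisson l x * truncPoissonScore l x) 0 := by
  have h := ((hasSum_natCast_mul_truncPoisson l).div_const l).sub
    ((hasSum_truncPoisson hl).mul_right (1 / (1 - exp (-l))))
  rw [div_div_cancel_left' hl, one_div, one_mul, sub_self] at h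
  refine h.congr_fun fun x => ?_
  rw [truncPoissonScore]
  ring

lemma truncPoisson_ne_zero {l : ℝ} {x : ℕ} (hl : l ≠ 0) (hx : x ≠ 0) : truncPoisson l x ≠ 0 := by
  rw [truncPoisson, if_neg hx]
  exact div_ne_zero (by positivity) (mul_ne_zero (by positivity) (one_sub_exp_neg_ne_zero hl))

lemma log_truncPoisson {l : ℝ} {x : ℕ} (hl : l ≠ 0) (hx : x ≠ 0) :
    log (truncPoisson l x) = x * log l - l - log x ! - log (1 - exp (-l)) := by
  rw [truncPoisson, if_neg hx, log_div (by positivity) (mul_ne_zero (by positivity)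
    (one_sub_exp_neg_ne_zero hl)), log_mul (by positivity) (by positivity),
    log_mul (by positivity) (one_sub_exp_neg_ne_zero hl), log_exp, log_pow]
  ring

lemma hasDerivAt_log_truncPoisson {l : ℝ} {x : ℕ} (hl : l ≠ 0) (hx : x ≠ 0) :
    HasDerivAt (fun t => log (truncPoisson t x)) (truncPoissonScore l x) l := by
  have hexp : HasDerivAt (fun t => exp (-t)) (-exp (-l)) l := by
    simpa using (hasDerivAt_neg l).exp
  have h : HasDerivAt (fun t => x * log t - t - log x ! - log (1 - exp (-t)))
      (x * l⁻¹ - 1 - (0 - -exp (-l)) / (1 - exp (-l))) l :=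
    ((((hasDerivAt_log hl).const_mul (x : ℝ)).sub (hasDerivAt_id l)).sub_const (log x !)).sub
      (((hasDerivAt_const l 1).sub hexp).log (one_sub_exp_neg_ne_zero hl))
  refine (h.congr_deriv ?_).congr_of_eventuallyEq ?_
  · have hden := one_sub_exp_neg_ne_zero hl
    rw [truncPoissonScore]
    field_simp
    ring
  · filter_upwards [eventually_ne_nhds hl] with t ht
    exact log_truncPoisson ht hx

lemma zipStar_zero (l p : ℝ) : zipStar l p 0 = p := by
  simp [zipStar, truncPoisson]

lemma zipStar_of_ne_zero (l p : ℝ) {x : ℕ} (hx : x ≠ 0) :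
    zipStar l p x = (1 - p) * truncPoisson l x := by
  simp [zipStar, hx]

lemma hasDerivAt_log_zipStar_zeroMass {l p : ℝ} {x : ℕ} (hl : l ≠ 0) (hx : x ≠ 0) (hp : p ≠ 1) :
    HasDerivAt (fun q => log (zipStar l q x)) (-(1 - p)⁻¹) p := by
  simp only [zipStar_of_ne_zero _ _ hx]
  have hp' : 1 - p ≠ 0 := sub_ne_zero.2 hp.symm
  have hc := truncPoisson_ne_zero hl hx
  refine ((((hasDerivAt_id' p).const_sub 1).mul_const _).log (mul_ne_zero hp' hc)).congr_deriv ?_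
  field_simp

lemma hasDerivAt_log_zipStar_rate {l p : ℝ} {x : ℕ} (hl : l ≠ 0) (hx : x ≠ 0) (hp : p ≠ 1) :
    HasDerivAt (fun t => log (zipStar t p x)) (truncPoissonScore l x) l := by
  refine ((hasDerivAt_log_truncPoisson hl hx).const_add (log (1 - p))).congr_of_eventuallyEq ?_
  filter_upwards [eventually_ne_nhds hl] with t ht
  rw [zipStar_of_ne_zero _ _ hx, log_mul (sub_ne_zero.2 hp.symm) (truncPoisson_ne_zero ht hx)]

theorem zipStar_fisher_orthogonal_general (l p : ℝ) (hl : 0 < l)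
    (hp2 : p < 1) :
    ∑' x : ℕ, zipStar l p x *
        deriv (fun q => Real.log (zipStar l q x)) p *
        deriv (fun t => Real.log (zipStar t p x)) l = 0 := by
  have hterm : ∀ x : ℕ, zipStar l p x * deriv (fun q => log (zipStar l q x)) p *
      deriv (fun t => log (zipStar t p x)) l = -(truncPoisson l x * truncPoissonScore l x) := by
    intro x
    rcases eq_or_ne x 0 with rfl | hx
    · simp [zipStar_zero, truncPoisson]
    · rw [(hasDerivAt_log_zipStar_zeroMass hl.ne' hx hp2.ne).deriv,
        (hasDerivAt_log_zipStar_rate hl.ne' hx hp2.ne).deriv, zipStar_of_ne_zero _ _ hx]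
      field_simp [sub_ne_zero.2 hp2.ne']
  rw [tsum_congr hterm, tsum_neg, (hasSum_truncPoisson_mul_score hl.ne').tsum_eq, neg_zero]

/-- The off-diagonal entry of the Fisher information matrix of the reparameterized
ZIP model in the parameters `(p*, λ)` vanishes: `p*` and `λ` are orthogonal. -/
theorem zipStar_fisher_orthogonal (l p : ℝ) (hl : 0 < l)
    (hp1 : Real.exp (-l) < p) (hp2 : p < 1) :
    ∑' x : ℕ, zipStar l p x *
        deriv (fun q => Real.log (zipStar l q x)) p *
        deriv (fun t => Real.log (zipStar t p x)) l = 0 :=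
  zipStar_fisher_orthogonal_general l p hl hp2
end

section
/- Let n ≥ 1, let k be an integer with 0 ≤ k ≤ n−1, and let s ≥ 0 be an integer. Then ∫₀^∞ ∫₀^1 (p + (1−p)e^{−λ})^k (1−p)^{n−k} e^{−(n−k)λ} λ^{s−1/2} dp dλ = (k!/(n+1)!) · Γ(s + 1/2) · Σ_{j=0}^{k} ((n−j)!/(k−j)!) · (n−j)^{−(s+1/2)}; in particular this integral is finite. -/
/-!
Expanding `(p + (1 - p) e^{-λ})^k` binomially turns the integrand into a nonnegative combination
of the terms `p^j (1 - p)^{n-j} e^{-(n-j)λ} λ^{s-1/2}`, `j ≤ k`. The `p`-integral of such a term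
is the Beta integral `j! (n-j)! / (n+1)!`, and its `λ`-integral is the Gamma integral
`Γ(s + 1/2) (n-j)^{-(s+1/2)}`, which is finite because `k < n` forces `n - j > 0`.
-/

open MeasureTheory Real Set

open Finset in
theorem add_pow_mul_pow_eq_sum {R : Type*} [CommSemiring R] (x z : R) {k n : ℕ} (hkn : k ≤ n) :
    (x + z) ^ k * z ^ (n - k) = ∑ j ∈ range (k + 1), x ^ j * z ^ (n - j) * k.choose j := by
  rw [add_pow, sum_mul]
  refine sum_congr rfl fun j hj => ?_
  rw [show n - j = (k - j) + (n - k) by have := mem_range.1 hj; omega, pow_add]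
  ring

theorem intervalIntegral_pow_mul_one_sub_pow (a b : ℕ) :
    ∫ x in (0 : ℝ)..1, x ^ a * (1 - x) ^ b =
      (a.factorial : ℝ) * b.factorial / (a + b + 1).factorial := by
  have hbeta := Complex.betaIntegral_eq_Gamma_mul_div (a + 1) (b + 1)
    (by simp only [Complex.add_re, Complex.natCast_re, Complex.one_re]; positivity)
    (by simp only [Complex.add_re, Complex.natCast_re, Complex.one_re]; positivity)
  have hreal : Complex.betaIntegral (a + 1) (b + 1)
      = ((∫ x in (0 : ℝ)..1, x ^ a * (1 - x) ^ b : ℝ) : ℂ) := by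
    rw [Complex.betaIntegral, ← intervalIntegral.integral_ofReal]
    refine intervalIntegral.integral_congr fun x _ => ?_
    push_cast
    rw [add_sub_cancel_right, add_sub_cancel_right, Complex.cpow_natCast, Complex.cpow_natCast]
  rw [hreal, show (a + 1 + (b + 1) : ℂ) = ((a + b + 1 : ℕ) : ℂ) + 1 by push_cast; ring,
    Complex.Gamma_nat_eq_factorial, Complex.Gamma_nat_eq_factorial,
    Complex.Gamma_nat_eq_factorial] at hbeta
  apply Complex.ofReal_injective
  rw [hbeta]
  simp

open Finset in
theorem intervalIntegral_add_mul_pow_mul_pow {k n : ℕ} (hkn : k ≤ n) (t : ℝ) :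
    ∫ p in (0 : ℝ)..1, (p + (1 - p) * t) ^ k * ((1 - p) * t) ^ (n - k) =
      ∑ j ∈ range (k + 1),
        k.factorial / (n + 1).factorial * ((n - j).factorial / (k - j).factorial) *
          t ^ (n - j) := by
  simp_rw [add_pow_mul_pow_eq_sum _ _ hkn, mul_pow]
  rw [intervalIntegral.integral_finsetSum fun j _ =>
    Continuous.intervalIntegrable (by fun_prop) _ _]
  refine sum_congr rfl fun j hj => ?_
  have hjk : j ≤ k := Nat.lt_succ_iff.1 (mem_range.1 hj)
  simp_rw [mul_assoc, mul_comm (t ^ (n - j)), ← mul_assoc]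
  rw [intervalIntegral.integral_mul_const, intervalIntegral.integral_mul_const,
    intervalIntegral_pow_mul_one_sub_pow, show j + (n - j) + 1 = n + 1 by omega,
    Nat.cast_choose ℝ hjk]
  field_simp

open Finset in
theorem lintegral_Ioi_ofReal_sum_rpow_mul_exp_neg_mul {ι : Type*} (t : Finset ι)
    {c r : ι → ℝ} (hc : ∀ i ∈ t, 0 ≤ c i) (hr : ∀ i ∈ t, 0 < r i) {a : ℝ}
    (ha : 0 < a) :
    ∫⁻ x in Ioi 0, ENNReal.ofReal (∑ i ∈ t, c i * (x ^ (a - 1) * exp (-(r i * x)))) =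
      ENNReal.ofReal (Gamma a * ∑ i ∈ t, c i * r i ^ (-a)) := by
  have hint : ∀ i ∈ t,
      IntegrableOn (fun x => c i * (x ^ (a - 1) * exp (-(r i * x)))) (Ioi 0) := by
    intro i hi
    have h := integrableOn_rpow_mul_exp_neg_mul_rpow (by linarith : -1 < a - 1) one_pos (hr i hi)
    simp only [rpow_one, neg_mul] at h
    exact h.const_mul _
  have hnonneg : 0 ≤ᵐ[volume.restrict (Ioi 0)]
      fun x => ∑ i ∈ t, c i * (x ^ (a - 1) * exp (-(r i * x))) := by
    filter_upwards [ae_restrict_mem measurableSet_Ioi] with x hx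
    exact sum_nonneg fun i hi => mul_nonneg (hc i hi) (by have : 0 < x := hx; positivity)
  rw [← ofReal_integral_eq_lintegral_ofReal (integrable_finsetSum _ hint) hnonneg,
    integral_finsetSum _ hint, mul_sum]
  refine congrArg _ (sum_congr rfl fun i hi => ?_)
  rw [integral_const_mul, integral_rpow_mul_exp_neg_mul_Ioi ha (hr i hi), one_div,
    inv_rpow (hr i hi).le, ← rpow_neg (hr i hi).le]
  ring

open Finset in
theorem lintegral_Ioc_zip_integrand {k n : ℕ} (hkn : k ≤ n) {l : ℝ} (hl : 0 < l) (b : ℝ) :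
    ∫⁻ p in Ioc (0 : ℝ) 1, ENNReal.ofReal ((p + (1 - p) * exp (-l)) ^ k * (1 - p) ^ (n - k) *
        exp (-((n : ℝ) - (k : ℝ)) * l) * l ^ b) =
      ENNReal.ofReal (∑ j ∈ range (k + 1),
        k.factorial / (n + 1).factorial * ((n - j).factorial / (k - j).factorial) *
          (l ^ b * exp (-(((n : ℝ) - j) * l)))) := by
  have hexp : ∀ m : ℕ, exp (-l) ^ m = exp (-(m * l)) := fun m => by
    rw [← exp_nat_mul, mul_neg]
  have hintegrand : ∀ p, (p + (1 - p) * exp (-l)) ^ k * (1 - p) ^ (n - k) *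
      exp (-((n : ℝ) - (k : ℝ)) * l) * l ^ b =
        (p + (1 - p) * exp (-l)) ^ k * ((1 - p) * exp (-l)) ^ (n - k) * l ^ b := fun p => by
    rw [mul_pow, hexp, Nat.cast_sub hkn, neg_mul]
    ring
  have hnonneg : 0 ≤ᵐ[volume.restrict (Ioc (0 : ℝ) 1)]
      fun p => (p + (1 - p) * exp (-l)) ^ k * ((1 - p) * exp (-l)) ^ (n - k) * l ^ b := by
    filter_upwards [ae_restrict_mem measurableSet_Ioc] with p ⟨hp0, hp1⟩
    have : 0 ≤ 1 - p := sub_nonneg.2 hp1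
    positivity
  simp_rw [hintegrand]
  rw [← ofReal_integral_eq_lintegral_ofReal (Continuous.integrableOn_Ioc (by fun_prop)) hnonneg,
    ← intervalIntegral.integral_of_le zero_le_one, intervalIntegral.integral_mul_const,
    intervalIntegral_add_mul_pow_mul_pow hkn, sum_mul]
  refine congrArg _ (sum_congr rfl fun j hj => ?_)
  rw [hexp, Nat.cast_sub (by have := mem_range.1 hj; omega)]
  ring

/-- Marginal density computation for the ZIP model under the prior
`π₁(p,λ) = λ^{−1/2}·1{0 < p ≤ 1}`:
`∫₀^∞ ∫₀^1 (p + (1−p)e^{−λ})^k (1−p)^{n−k} e^{−(n−k)λ} λ^{s−1/2} dp dλ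
 = (k!/(n+1)!) Γ(s+1/2) Σ_{j=0}^k ((n−j)!/(k−j)!) (n−j)^{−(s+1/2)}`,
in particular the integral is finite. -/
theorem zip_marginal_eq (n k s : ℕ) (hn : 1 ≤ n) (hk : k ≤ n - 1) :
    (∫⁻ l in Set.Ioi (0 : ℝ), ∫⁻ p in Set.Ioc (0 : ℝ) 1,
        ENNReal.ofReal ((p + (1 - p) * Real.exp (-l)) ^ k * (1 - p) ^ (n - k) *
          Real.exp (-((n : ℝ) - (k : ℝ)) * l) * l ^ ((s : ℝ) - 1 / 2))) =
      ENNReal.ofReal (((Nat.factorial k : ℝ) / (Nat.factorial (n + 1) : ℝ)) *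
        Real.Gamma ((s : ℝ) + 1 / 2) *
        ∑ j ∈ Finset.range (k + 1),
          ((Nat.factorial (n - j) : ℝ) / (Nat.factorial (k - j) : ℝ)) *
            ((n : ℝ) - (j : ℝ)) ^ (-((s : ℝ) + 1 / 2))) := by
  have hkn : k < n := by omega
  rw [setLIntegral_congr_fun measurableSet_Ioi fun l hl =>
      lintegral_Ioc_zip_integrand hkn.le hl _,
    show (s : ℝ) - 1 / 2 = (s + 1 / 2) - 1 by ring,
    lintegral_Ioi_ofReal_sum_rpow_mul_exp_neg_mul _ (fun _ _ => by positivity)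
      (fun j hj => by have := Finset.mem_range.1 hj; simp only [sub_pos, Nat.cast_lt]; omega)
      (by positivity)]
  congr 1
  simp_rw [Finset.mul_sum]
  exact Finset.sum_congr rfl fun _ _ => by ring
end

section
/- Let n ≥ 1, let k be an integer with 0 ≤ k ≤ n, let s ≥ 0 be an integer with (s = 0 if and only if k = n allowed), and let a > 0, b > 0. Then the ratio [∫₀^∞ ∫₀^1 (p + (1−p)e^{−λ})^k (1−p)^{n−k} e^{−(n−k)λ} λ^s g(λ|a,b) dp dλ] / [∫₀^∞ e^{−nλ} λ^s g(λ|a,b) dλ] equals (k!/(n+1)!) · Σ_{j=0}^{k} ((n−j)!/(k−j)!) · (1 − j/(n+b))^{−(s+a)}, and both integrals are finite. -/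
open MeasureTheory Real Set ENNReal

/-!
Expanding `(p + (1 - p) e^{-λ})^k` binomially turns the `p`-integral into a sum of Beta integrals
`B(j + 1, n - j + 1) = j! (n - j)! / (n + 1)!`, and the `j`-th term carries the factor
`e^{-(n - j)λ}`. Against the Gamma prior, `e^{-cλ} λ^s` integrates to
`b^a Γ(s + a) / (Γ(a) (c + b)^(s + a))`, so each term of the numerator divided by the
denominator leaves `((n + b) / (n - j + b))^(s + a) = (1 - j / (n + b))^(-(s + a))`.
-/
open scoped Nat

theorem integral_pow_mul_one_sub_pow (m r : ℕ) :
    ∫ x in (0 : ℝ)..1, x ^ m * (1 - x) ^ r = (m ! * r ! / (m + r + 1)! : ℝ) := by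
  have hβ := Complex.Gamma_mul_Gamma_eq_betaIntegral (s := m + 1) (t := r + 1)
    (by simp only [Complex.add_re, Complex.natCast_re, Complex.one_re]; positivity)
    (by simp only [Complex.add_re, Complex.natCast_re, Complex.one_re]; positivity)
  have hreal : Complex.betaIntegral (m + 1) (r + 1) =
      ((∫ x in (0 : ℝ)..1, x ^ m * (1 - x) ^ r : ℝ) : ℂ) := by
    rw [Complex.betaIntegral, ← intervalIntegral.integral_ofReal]
    refine intervalIntegral.integral_congr fun x _ => ?_
    simp only [add_sub_cancel_right, Complex.cpow_natCast, Complex.ofReal_mul, Complex.ofReal_pow,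
      Complex.ofReal_sub, Complex.ofReal_one]
  rw [show (m : ℂ) + 1 + (r + 1) = ((m + r + 1 : ℕ) : ℂ) + 1 by push_cast; ring,
    Complex.Gamma_nat_eq_factorial, Complex.Gamma_nat_eq_factorial, Complex.Gamma_nat_eq_factorial,
    hreal] at hβ
  have hβ' : (m ! * r ! : ℝ) = (m + r + 1)! * ∫ x in (0 : ℝ)..1, x ^ m * (1 - x) ^ r := by
    exact_mod_cast hβ
  rw [hβ', mul_div_cancel_left₀ _ (by positivity)]

theorem integral_add_one_sub_mul_pow_mul_one_sub_pow {n k : ℕ} (hk : k ≤ n) (E : ℝ) :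
    ∫ x in (0 : ℝ)..1, (x + (1 - x) * E) ^ k * (1 - x) ^ (n - k) =
      k ! / (n + 1)! *
        ∑ j ∈ Finset.range (k + 1), ((n - j)! / (k - j)! : ℝ) * E ^ (k - j) := by
  have hexpand : ∀ x : ℝ, (x + (1 - x) * E) ^ k * (1 - x) ^ (n - k) =
      ∑ j ∈ Finset.range (k + 1), (k.choose j * E ^ (k - j)) * (x ^ j * (1 - x) ^ (n - j)) := by
    intro x
    rw [add_pow, Finset.sum_mul]
    refine Finset.sum_congr rfl fun j hj => ?_
    have hj : j ≤ k := Nat.lt_succ_iff.mp (Finset.mem_range.mp hj)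
    rw [show n - j = (k - j) + (n - k) by omega, pow_add, mul_pow]
    ring
  simp_rw [hexpand]
  rw [intervalIntegral.integral_finsetSum fun j _ =>
    (by fun_prop : Continuous _).intervalIntegrable _ _, Finset.mul_sum]
  refine Finset.sum_congr rfl fun j hj => ?_
  have hj : j ≤ k := Nat.lt_succ_iff.mp (Finset.mem_range.mp hj)
  rw [intervalIntegral.integral_const_mul, integral_pow_mul_one_sub_pow,
    show j + (n - j) + 1 = n + 1 by omega]
  have hchoose : (k.choose j * j ! * (k - j)! : ℝ) = k ! := by
    exact_mod_cast Nat.choose_mul_factorial_mul_factorial hj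
  rw [← hchoose]
  field_simp

theorem lintegral_Ioc_add_one_sub_mul_pow_mul_one_sub_pow_mul {n k : ℕ} (hk : k ≤ n) {E C : ℝ}
    (hE : 0 ≤ E) (hC : 0 ≤ C) :
    ∫⁻ p in Ioc 0 1, ENNReal.ofReal ((p + (1 - p) * E) ^ k * (1 - p) ^ (n - k) * C) =
      ENNReal.ofReal ((k ! / (n + 1)! *
        ∑ j ∈ Finset.range (k + 1), ((n - j)! / (k - j)! : ℝ) * E ^ (k - j)) * C) := by
  rw [← ofReal_integral_eq_lintegral_ofReal (Continuous.integrableOn_Ioc (by fun_prop)),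
    integral_mul_const, ← intervalIntegral.integral_of_le zero_le_one,
    integral_add_one_sub_mul_pow_mul_one_sub_pow hk]
  filter_upwards [ae_restrict_mem measurableSet_Ioc] with p ⟨hp0, hp1⟩
  have : 0 ≤ p + (1 - p) * E := by nlinarith
  have : 0 ≤ 1 - p := by linarith
  positivity

theorem exp_neg_pow_mul_exp_neg_mul {n k j : ℕ} (hjk : j ≤ k) (hk : k ≤ n) (l : ℝ) :
    exp (-l) ^ (k - j) * exp (-((n : ℝ) - k) * l) = exp (-((n - j : ℕ) : ℝ) * l) := by
  rw [← exp_nat_mul, ← exp_add, Nat.cast_sub hjk, Nat.cast_sub (hjk.trans hk)]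
  ring_nf

theorem lintegral_Ioc_zip_likelihood_mul {n k : ℕ} (hk : k ≤ n) {l C : ℝ} (hC : 0 ≤ C) :
    ∫⁻ p in Ioc 0 1, ENNReal.ofReal ((p + (1 - p) * exp (-l)) ^ k * (1 - p) ^ (n - k) *
        exp (-((n : ℝ) - k) * l) * C) =
      ENNReal.ofReal (k ! / (n + 1)!) * ENNReal.ofReal (∑ j ∈ Finset.range (k + 1),
        ((n - j)! / (k - j)! : ℝ) * (exp (-((n - j : ℕ) : ℝ) * l) * C)) := by
  simp_rw [mul_assoc _ (exp _)]
  rw [lintegral_Ioc_add_one_sub_mul_pow_mul_one_sub_pow_mul hk (exp_pos _).le (by positivity),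
    mul_assoc, ofReal_mul (by positivity), Finset.sum_mul]
  congr 2
  refine Finset.sum_congr rfl fun j hj => ?_
  rw [mul_assoc, ← mul_assoc (_ ^ _),
    exp_neg_pow_mul_exp_neg_mul (Nat.lt_succ_iff.mp (Finset.mem_range.mp hj)) hk]

theorem lintegral_ofReal_sum_mul {α ι : Type*} [MeasurableSpace α] {μ : Measure α}
    (s : Finset ι) {w : ι → ℝ} {f : ι → α → ℝ} (hw : ∀ i ∈ s, 0 ≤ w i)
    (hf : ∀ i ∈ s, 0 ≤ᵐ[μ] f i) (hfm : ∀ i ∈ s, AEMeasurable (f i) μ) :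
    ∫⁻ x, ENNReal.ofReal (∑ i ∈ s, w i * f i x) ∂μ =
      ∑ i ∈ s, ENNReal.ofReal (w i) * ∫⁻ x, ENNReal.ofReal (f i x) ∂μ := by
  have hsum : ∀ᵐ x ∂μ, ENNReal.ofReal (∑ i ∈ s, w i * f i x) =
      ∑ i ∈ s, ENNReal.ofReal (w i) * ENNReal.ofReal (f i x) := by
    filter_upwards [(ae_ball_iff s.countable_toSet).mpr hf] with x hx
    rw [ofReal_sum_of_nonneg fun i hi => mul_nonneg (hw i hi) (hx i hi)]
    exact Finset.sum_congr rfl fun i hi => ofReal_mul (hw i hi)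
  rw [lintegral_congr_ae hsum, lintegral_finsetSum' _ fun i hi =>
    ((hfm i hi).ennreal_ofReal.const_mul _)]
  exact Finset.sum_congr rfl fun i _ => lintegral_const_mul' _ _ ofReal_ne_top

theorem lintegral_zip_marginal_eq_sum {n k s : ℕ} (hk : k ≤ n) {g : ℝ → ℝ}
    (hg : ∀ l ∈ Ioi (0 : ℝ), 0 ≤ g l) (hgm : Measurable g) :
    ∫⁻ l in Ioi 0, ∫⁻ p in Ioc 0 1, ENNReal.ofReal ((p + (1 - p) * exp (-l)) ^ k *
        (1 - p) ^ (n - k) * exp (-((n : ℝ) - k) * l) * l ^ s * g l) =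
      ENNReal.ofReal (k ! / (n + 1)!) * ∑ j ∈ Finset.range (k + 1),
        ENNReal.ofReal ((n - j)! / (k - j)!) *
          ∫⁻ l in Ioi 0, ENNReal.ofReal (exp (-((n - j : ℕ) : ℝ) * l) * l ^ s * g l) := by
  have hsg : ∀ l ∈ Ioi (0 : ℝ), 0 ≤ l ^ s * g l := fun l hl =>
    mul_nonneg (pow_nonneg (le_of_lt hl) s) (hg l hl)
  rw [setLIntegral_congr_fun measurableSet_Ioi fun l hl => (lintegral_congr fun p => by
      rw [mul_assoc]).trans (lintegral_Ioc_zip_likelihood_mul hk (hsg l hl)),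
    lintegral_const_mul' _ _ ofReal_ne_top,
    lintegral_ofReal_sum_mul _ (fun j _ => by positivity)
      (fun j _ => ae_restrict_of_forall_mem measurableSet_Ioi fun l hl =>
        mul_nonneg (exp_pos _).le (hsg l hl))
      (fun j _ => by fun_prop)]
  simp_rw [← mul_assoc (exp _)]

theorem lintegral_rpow_mul_exp_neg_mul_Ioi {t r : ℝ} (ht : 0 < t) (hr : 0 < r) :
    ∫⁻ x in Ioi 0, ENNReal.ofReal (x ^ (t - 1) * exp (-(r * x))) =
      ENNReal.ofReal ((1 / r) ^ t * Gamma t) := by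
  have hint := integral_rpow_mul_exp_neg_mul_Ioi ht hr
  rw [← hint, ofReal_integral_eq_lintegral_ofReal]
  · -- a non-integrable function would have Bochner integral `0`
    exact Integrable.of_integral_ne_zero (by rw [hint]; positivity)
  · filter_upwards [ae_restrict_mem measurableSet_Ioi] with x (hx : 0 < x)
    positivity

theorem lintegral_exp_mul_pow_mul_gamma_density {a b c : ℝ} (s : ℕ) (ha : 0 < a) (hb : 0 ≤ b)
    (hcb : 0 < c + b) :
    ∫⁻ l in Ioi 0, ENNReal.ofReal
        (exp (-c * l) * l ^ s * (b ^ a * exp (-b * l) * l ^ (a - 1) / Gamma a)) =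
      ENNReal.ofReal (b ^ a / Gamma a * ((1 / (c + b)) ^ (s + a) * Gamma (s + a))) := by
  have hB : 0 ≤ b ^ a / Gamma a := by positivity
  rw [ofReal_mul hB, ← lintegral_rpow_mul_exp_neg_mul_Ioi (by positivity) hcb,
    ← lintegral_const_mul' _ _ ofReal_ne_top]
  refine setLIntegral_congr_fun measurableSet_Ioi fun l (hl : 0 < l) => ?_
  rw [← ofReal_mul hB, add_sub_assoc, rpow_add hl, Real.rpow_natCast,
    show -((c + b) * l) = -c * l + -b * l by ring, exp_add]
  ring_nf

theorem one_sub_div_rpow_neg {N x : ℝ} (t : ℝ) (hN : 0 < N) (hx : x < N) :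
    (1 - x / N) ^ (-t) = (1 / (N - x)) ^ t / (1 / N) ^ t := by
  have hNx : 0 < N - x := sub_pos.mpr hx
  rw [← div_rpow (by positivity) (by positivity), rpow_neg (by field_simp; linarith),
    ← inv_rpow (by field_simp; linarith)]
  congr 1
  field_simp

theorem zip_gamma_bayes_factor_general (n k s : ℕ) (a b : ℝ) (hk : k ≤ n)
    (ha : 0 < a) (hb : 0 < b) :
    let g : ℝ → ℝ := fun l => b ^ a * Real.exp (-b * l) * l ^ (a - 1) / Real.Gamma a
    let I1 : ℝ≥0∞ := ∫⁻ l in Set.Ioi (0 : ℝ), ∫⁻ p in Set.Ioc (0 : ℝ) 1,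
      ENNReal.ofReal ((p + (1 - p) * Real.exp (-l)) ^ k * (1 - p) ^ (n - k) *
        Real.exp (-((n : ℝ) - (k : ℝ)) * l) * l ^ s * g l)
    let I0 : ℝ≥0∞ := ∫⁻ l in Set.Ioi (0 : ℝ),
      ENNReal.ofReal (Real.exp (-(n : ℝ) * l) * l ^ s * g l)
    I1 ≠ ⊤ ∧ I0 ≠ ⊤ ∧
      I1 / I0 = ENNReal.ofReal (((Nat.factorial k : ℝ) / (Nat.factorial (n + 1) : ℝ)) *
        ∑ j ∈ Finset.range (k + 1),
          ((Nat.factorial (n - j) : ℝ) / (Nat.factorial (k - j) : ℝ)) *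
            (1 - (j : ℝ) / ((n : ℝ) + b)) ^ (-((s : ℝ) + a))) := by
  intro g I1 I0
  set M : ℝ → ℝ := fun c =>
    b ^ a / Gamma a * ((1 / (c + b)) ^ ((s : ℝ) + a) * Gamma (s + a))
  have hM : ∀ c : ℕ, ∫⁻ l in Ioi 0, ENNReal.ofReal (exp (-c * l) * l ^ s * g l) =
      ENNReal.ofReal (M c) := fun c =>
    lintegral_exp_mul_pow_mul_gamma_density s ha hb.le (by positivity)
  have hM_pos : ∀ c : ℕ, 0 < M c := fun c => by simp only [M]; positivity
  have hI1 : I1 = ENNReal.ofReal (k ! / (n + 1)! * ∑ j ∈ Finset.range (k + 1),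
      ((n - j)! / (k - j)! : ℝ) * M (n - j : ℕ)) := by
    simp only [I1]
    rw [lintegral_zip_marginal_eq_sum (g := g) hk
      (fun l (hl : 0 < l) => by simp only [g]; positivity) (by fun_prop),
      ofReal_mul (by positivity),
      ofReal_sum_of_nonneg fun j _ => (mul_pos (by positivity) (hM_pos _)).le]
    simp_rw [hM]
    exact congrArg _ (Finset.sum_congr rfl fun j _ => (ofReal_mul (by positivity)).symm)
  have hI0 : I0 = ENNReal.ofReal (M n) := hM n
  refine ⟨hI1 ▸ ofReal_ne_top, hI0 ▸ ofReal_ne_top, ?_⟩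
  rw [hI1, hI0, ← ofReal_div_of_pos (hM_pos n), mul_div_assoc, Finset.sum_div]
  congr 2
  refine Finset.sum_congr rfl fun j hj => ?_
  have hjn : j ≤ n := (Nat.lt_succ_iff.mp (Finset.mem_range.mp hj)).trans hk
  have hjn' : (j : ℝ) < n + b := by linarith [(Nat.cast_le (α := ℝ)).mpr hjn]
  rw [mul_div_assoc, one_sub_div_rpow_neg _ (by positivity) hjn', Nat.cast_sub hjn]
  simp only [M, sub_add_eq_add_sub]
  rw [mul_div_mul_left _ _ (by positivity), mul_div_mul_right _ _ (by positivity)]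

/-- With a `Gamma(a,b)` prior for `λ` under both models and a uniform prior for `p`,
the Bayes factor of the ZIP model against the Poisson model for a sample of `n`
counts with `k` zeros and total count `s` equals
`(k!/(n+1)!) Σ_{j=0}^k ((n−j)!/(k−j)!) (1 − j/(n+b))^{−(s+a)}`,
and both marginal integrals are finite. -/
theorem zip_gamma_bayes_factor (n k s : ℕ) (a b : ℝ) (hn : 1 ≤ n) (hk : k ≤ n)
    (ha : 0 < a) (hb : 0 < b) :
    let g : ℝ → ℝ := fun l => b ^ a * Real.exp (-b * l) * l ^ (a - 1) / Real.Gamma a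
    let I1 : ℝ≥0∞ := ∫⁻ l in Set.Ioi (0 : ℝ), ∫⁻ p in Set.Ioc (0 : ℝ) 1,
      ENNReal.ofReal ((p + (1 - p) * Real.exp (-l)) ^ k * (1 - p) ^ (n - k) *
        Real.exp (-((n : ℝ) - (k : ℝ)) * l) * l ^ s * g l)
    let I0 : ℝ≥0∞ := ∫⁻ l in Set.Ioi (0 : ℝ),
      ENNReal.ofReal (Real.exp (-(n : ℝ) * l) * l ^ s * g l)
    I1 ≠ ⊤ ∧ I0 ≠ ⊤ ∧
      I1 / I0 = ENNReal.ofReal (((Nat.factorial k : ℝ) / (Nat.factorial (n + 1) : ℝ)) *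
        ∑ j ∈ Finset.range (k + 1),
          ((Nat.factorial (n - j) : ℝ) / (Nat.factorial (k - j) : ℝ)) *
            (1 - (j : ℝ) / ((n : ℝ) + b)) ^ (-((s : ℝ) + a))) :=
  zip_gamma_bayes_factor_general n k s a b hk ha hb
end

section
/- Fix an integer n ≥ 2 and a real s ≥ 0. For integers k with 0 ≤ k ≤ n−2, define B(k) = (k!/(n+1)!) · Σ_{j=0}^{k} ((n−j)!/(k−j)!) · (1 − j/n)^{−(s+1/2)}. Then B(k) < B(k+1) for all 0 ≤ k ≤ n−2; that is, the Bayes factor is strictly increasing in the number of zero counts k for fixed n and s. -/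
/-!
Multiplying `B(k)` by `(n+1)!` turns it into `∑_{j ≤ k} k^{(j)} (n-j)! (1 - j/n)^{-(s+1/2)}`,
where `k^{(j)} = k!/(k-j)!` is the falling factorial. Passing from `k` to `k+1` increases
every falling factorial and adds the positive term `j = k+1`.
-/

open Finset Nat

section

variable {K : Type*} [Field K]

lemma Nat.cast_factorial_div_factorial_sub [CharZero K] {k j : ℕ} (hj : j ≤ k) :
    (k ! : K) / (k - j)! = k.descFactorial j := by
  rw [div_eq_iff (Nat.cast_ne_zero.mpr (Nat.factorial_ne_zero _)),
    ← Nat.factorial_mul_descFactorial hj]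
  push_cast
  ring

lemma factorial_mul_sum_div_factorial_sub [CharZero K] (k : ℕ) (f : ℕ → K) :
    (k ! : K) * ∑ j ∈ range (k + 1), f j / (k - j)! =
      ∑ j ∈ range (k + 1), (k.descFactorial j : K) * f j := by
  rw [mul_sum]
  refine sum_congr rfl fun j hj => ?_
  rw [← Nat.cast_factorial_div_factorial_sub (Nat.lt_succ_iff.mp (mem_range.mp hj))]
  ring

lemma sum_descFactorial_mul_lt_succ [LinearOrder K] [IsStrictOrderedRing K] (k : ℕ)
    (a : ℕ → K) (ha : ∀ j ≤ k, 0 ≤ a j) (hlast : 0 < a (k + 1)) :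
    ∑ j ∈ range (k + 1), (k.descFactorial j : K) * a j <
      ∑ j ∈ range (k + 2), ((k + 1).descFactorial j : K) * a j := by
  rw [sum_range_succ _ (k + 1)]
  have hmono : ∑ j ∈ range (k + 1), (k.descFactorial j : K) * a j ≤
      ∑ j ∈ range (k + 1), ((k + 1).descFactorial j : K) * a j := by
    refine sum_le_sum fun j hj => ?_
    have hjk : j ≤ k := Nat.lt_succ_iff.mp (mem_range.mp hj)
    gcongr
    · exact ha j hjk
    · exact Nat.le_succ k
  have hnew : 0 < ((k + 1).descFactorial (k + 1) : K) * a (k + 1) := by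
    rw [Nat.descFactorial_self]
    positivity
  linarith

end

lemma one_sub_div_rpow_pos {j n : ℕ} (hj : j < n) (p : ℝ) : 0 < (1 - (j : ℝ) / n) ^ p := by
  have hn : (0 : ℝ) < n := by exact_mod_cast (Nat.zero_le j).trans_lt hj
  have hjn : (j : ℝ) / n < 1 := (div_lt_one hn).mpr (by exact_mod_cast hj)
  exact Real.rpow_pos_of_pos (by linarith) p

theorem bayes_factor_strictMono_in_k_general (n : ℕ) (hn : 2 ≤ n) (s : ℝ)
    (k : ℕ) (hk : k ≤ n - 2) :
    ((Nat.factorial k : ℝ) / (Nat.factorial (n + 1) : ℝ)) *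
        ∑ j ∈ Finset.range (k + 1),
          ((Nat.factorial (n - j) : ℝ) / (Nat.factorial (k - j) : ℝ)) *
            (1 - (j : ℝ) / (n : ℝ)) ^ (-(s + 1 / 2)) <
      ((Nat.factorial (k + 1) : ℝ) / (Nat.factorial (n + 1) : ℝ)) *
        ∑ j ∈ Finset.range (k + 2),
          ((Nat.factorial (n - j) : ℝ) / (Nat.factorial (k + 1 - j) : ℝ)) *
            (1 - (j : ℝ) / (n : ℝ)) ^ (-(s + 1 / 2)) := by
  have hkn : k + 1 < n := by omega
  simp_rw [div_mul_eq_mul_div]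
  rw [factorial_mul_sum_div_factorial_sub, factorial_mul_sum_div_factorial_sub (k + 1)]
  refine div_lt_div_of_pos_right ?_ (by positivity)
  refine sum_descFactorial_mul_lt_succ k _ (fun j hj => ?_) ?_
  · have := one_sub_div_rpow_pos (hj.trans_lt (Nat.lt_of_succ_lt hkn)) (-(s + 1 / 2))
    positivity
  · have := one_sub_div_rpow_pos hkn (-(s + 1 / 2))
    positivity

/-- The objective Bayes factor
`B(k) = (k!/(n+1)!) Σ_{j=0}^k ((n−j)!/(k−j)!) (1 − j/n)^{−(s+1/2)}`
is strictly increasing in the number of zero counts `k`, for fixed `n ≥ 2` and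
fixed total count `s ≥ 0`. -/
theorem bayes_factor_strictMono_in_k (n : ℕ) (hn : 2 ≤ n) (s : ℝ) (hs : 0 ≤ s)
    (k : ℕ) (hk : k ≤ n - 2) :
    ((Nat.factorial k : ℝ) / (Nat.factorial (n + 1) : ℝ)) *
        ∑ j ∈ Finset.range (k + 1),
          ((Nat.factorial (n - j) : ℝ) / (Nat.factorial (k - j) : ℝ)) *
            (1 - (j : ℝ) / (n : ℝ)) ^ (-(s + 1 / 2)) <
      ((Nat.factorial (k + 1) : ℝ) / (Nat.factorial (n + 1) : ℝ)) *
        ∑ j ∈ Finset.range (k + 2),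
          ((Nat.factorial (n - j) : ℝ) / (Nat.factorial (k + 1 - j) : ℝ)) *
            (1 - (j : ℝ) / (n : ℝ)) ^ (-(s + 1 / 2)) :=
  bayes_factor_strictMono_in_k_general n hn s k hk
end

section
/- Let n ≥ 1, let h be a probability density on (0,1) (h ≥ 0 measurable with ∫₀^1 h(p) dp = 1), and let π : (0,∞) → [0,∞) be measurable with ∫₀^∞ π(λ) dλ = ∞ (an improper prior). Then the marginal density of the all-zero sample under the ZIP model is infinite: ∫₀^∞ ∫₀^1 (p + (1−p)e^{−λ})^n h(p) π(λ) dp dλ = ∞. -/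
/-!
Since `p ≤ p + (1 - p) e^{-λ}`, the inner integral is bounded below, uniformly in `λ`, by
`c · π(λ)` with `c = ∫₀¹ pⁿ h(p) dp`, and `c > 0` because `pⁿ > 0` on `(0,1)` while `h` has
mass one there. Integrating `c · π` against `λ` gives `c · ∞ = ∞`.
-/

open MeasureTheory Real Set

open scoped ENNReal

section LIntegral

variable {α : Type*} [MeasurableSpace α] {μ : Measure α} {f g : α → ℝ≥0∞}

theorem lintegral_mul_ne_zero (hf : AEMeasurable f μ) (hg : AEMeasurable g μ)
    (hf0 : ∀ᵐ x ∂μ, f x ≠ 0) (hg0 : ∫⁻ x, g x ∂μ ≠ 0) : ∫⁻ x, f x * g x ∂μ ≠ 0 := by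
  rw [Ne, lintegral_eq_zero_iff' (f := fun x => f x * g x) (hf.mul hg)]
  rw [Ne, lintegral_eq_zero_iff' hg] at hg0
  refine fun hfg => hg0 ?_
  filter_upwards [hfg, hf0] with x hfgx hfx
  exact (mul_eq_zero.mp hfgx).resolve_left hfx

theorem lintegral_mul_eq_top_of_le {c : ℝ≥0∞} (hc : c ≠ 0) (hcf : ∀ᵐ x ∂μ, c ≤ f x)
    (hg : ∫⁻ x, g x ∂μ = ∞) : ∫⁻ x, f x * g x ∂μ = ∞ := by
  refine top_le_iff.mp ?_
  calc ∞ = c * ∫⁻ x, g x ∂μ := by rw [hg, ENNReal.mul_top hc]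
    _ ≤ ∫⁻ x, c * g x ∂μ := lintegral_const_mul_le c g
    _ ≤ ∫⁻ x, f x * g x ∂μ := lintegral_mono_ae (hcf.mono fun x hx => mul_le_mul_left hx _)

end LIntegral

theorem le_add_one_sub_mul_exp_neg {p : ℝ} (hp : p ≤ 1) (l : ℝ) :
    p ≤ p + (1 - p) * exp (-l) :=
  le_add_of_nonneg_right (mul_nonneg (sub_nonneg.2 hp) (exp_pos _).le)

theorem zip_all_zero_marginal_infinite_general (n : ℕ) (h pr : ℝ → ℝ)
    (hmeas : Measurable h) (hnonneg : ∀ p ∈ Set.Ioo (0 : ℝ) 1, 0 ≤ h p)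
    (hprob : ∫⁻ p in Set.Ioo (0 : ℝ) 1, ENNReal.ofReal (h p) = 1)
    (primproper : ∫⁻ l in Set.Ioi (0 : ℝ), ENNReal.ofReal (pr l) = ⊤) :
    ∫⁻ l in Set.Ioi (0 : ℝ), ∫⁻ p in Set.Ioo (0 : ℝ) 1,
        ENNReal.ofReal ((p + (1 - p) * Real.exp (-l)) ^ n * h p * pr l) = ⊤ := by
  set c := ∫⁻ p in Ioo (0 : ℝ) 1, ENNReal.ofReal (p ^ n) * ENNReal.ofReal (h p)
  have hc : c ≠ 0 :=
    lintegral_mul_ne_zero (by fun_prop) hmeas.ennreal_ofReal.aemeasurable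
      (ae_restrict_of_forall_mem measurableSet_Ioo fun p hp => by simp [hp.1])
      (hprob ▸ one_ne_zero)
  have hinner (l : ℝ) :
      c ≤ ∫⁻ p in Ioo (0 : ℝ) 1, ENNReal.ofReal ((p + (1 - p) * exp (-l)) ^ n * h p) :=
    setLIntegral_mono' measurableSet_Ioo fun p hp => by
      rw [← ENNReal.ofReal_mul (pow_nonneg hp.1.le n)]
      gcongr
      · exact hnonneg p hp
      · exact hp.1.le
      · exact le_add_one_sub_mul_exp_neg hp.2.le l
  have hsplit (l : ℝ) :
      ∫⁻ p in Ioo (0 : ℝ) 1, ENNReal.ofReal ((p + (1 - p) * exp (-l)) ^ n * h p * pr l) =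
        (∫⁻ p in Ioo (0 : ℝ) 1, ENNReal.ofReal ((p + (1 - p) * exp (-l)) ^ n * h p)) *
          ENNReal.ofReal (pr l) := by
    rw [← lintegral_mul_const' _ _ ENNReal.ofReal_ne_top]
    refine setLIntegral_congr_fun measurableSet_Ioo fun p hp => ENNReal.ofReal_mul ?_
    exact mul_nonneg (pow_nonneg (hp.1.le.trans (le_add_one_sub_mul_exp_neg hp.2.le l)) n)
      (hnonneg p hp)
  simp_rw [hsplit]
  exact lintegral_mul_eq_top_of_le hc (ae_of_all _ hinner) primproper

/-- If `h` is a probability density on `(0,1)` and `π` is an improper prior on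
`(0,∞)` (nonnegative, measurable, with infinite total mass), then the marginal
density of the all-zero sample of size `n` under the ZIP model is infinite:
`∫₀^∞ ∫₀^1 (p + (1−p)e^{−λ})^n h(p) π(λ) dp dλ = ∞`. -/
theorem zip_all_zero_marginal_infinite (n : ℕ) (hn : 1 ≤ n) (h pr : ℝ → ℝ)
    (hmeas : Measurable h) (hnonneg : ∀ p ∈ Set.Ioo (0 : ℝ) 1, 0 ≤ h p)
    (hprob : ∫⁻ p in Set.Ioo (0 : ℝ) 1, ENNReal.ofReal (h p) = 1)
    (prmeas : Measurable pr) (prnonneg : ∀ l ∈ Set.Ioi (0 : ℝ), 0 ≤ pr l)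
    (primproper : ∫⁻ l in Set.Ioi (0 : ℝ), ENNReal.ofReal (pr l) = ⊤) :
    ∫⁻ l in Set.Ioi (0 : ℝ), ∫⁻ p in Set.Ioo (0 : ℝ) 1,
        ENNReal.ofReal ((p + (1 - p) * Real.exp (-l)) ^ n * h p * pr l) = ⊤ :=
  zip_all_zero_marginal_infinite_general n h pr hmeas hnonneg hprob primproper
end

section
/- (Theorem 4.1) Consider the Poisson log-linear regression model: for i = 1,…,n, λᵢ(β) = exp(a₀ᵢ + aᵢᵀβ) with β ∈ ℝ^q, covariate vectors aᵢ ∈ ℝ^q, offsets a₀ᵢ ∈ ℝ, and counts xᵢ ∈ ℕ. Assume the n×q matrix A with rows aᵢᵀ has rank q. Then the marginal density under the Jeffreys prior is finite: ∫_{ℝ^q} Π_{i=1}^n (e^{−λᵢ(β)} λᵢ(β)^{xᵢ}/xᵢ!) · det(Σ_{i=1}^n λᵢ(β) aᵢ aᵢᵀ)^{1/2} dβ < ∞. -/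
open MeasureTheory Real Set

/-!
Expanding the determinant multilinearly in its rows,
`det (∑ᵢ λᵢ aᵢ aᵢᵀ) = ∑_{f : Fin q → Fin n} (∏_r λ_{f r}) (∏_r a_{f r, r}) det A_f`,
where `A_f` is the `q × q` matrix with rows `a_{f r}`; only injective `f` contribute.
As `√` is subadditive, the integrand is bounded by a sum over `f` of terms
`√|(∏_r a_{f r, r}) det A_f| · ∏ᵢ pᵢ · ∏_r √λ_{f r}` with Poisson probabilities `pᵢ`.
For injective `f` the factors `pᵢ ≤ 1` with `i` outside the range of `f` can be dropped, and
`p(x | λ) √λ ≤ 2^x exp (-|log λ| / 2)`, so each term is dominated by a product of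
`exp (-|ηᵣ| / 2)` over the `q` linear predictors `η = a0 ∘ f + A_f β`. When `det A_f ≠ 0`,
this is integrable after the linear change of variables `β ↦ A_f β`.
-/

noncomputable def poissonProb (r : ℝ) (k : ℕ) : ℝ :=
  exp (-r) * r ^ k / (k.factorial : ℝ)

section PoissonProb

variable {r : ℝ}

theorem poissonProb_nonneg (hr : 0 ≤ r) (k : ℕ) : 0 ≤ poissonProb r k := by
  unfold poissonProb
  positivity

theorem poissonProb_le_one (hr : 0 ≤ r) (k : ℕ) : poissonProb r k ≤ 1 :=
  calc poissonProb r k = exp (-r) * (r ^ k / k.factorial) := mul_div_assoc _ _ _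
    _ ≤ exp (-r) * exp r := by gcongr; exact pow_div_factorial_le_exp r hr k
    _ = 1 := by rw [← exp_add, neg_add_cancel, exp_zero]

theorem poissonProb_le_two_pow_mul_exp (hr : 0 ≤ r) (k : ℕ) :
    poissonProb r k ≤ 2 ^ k * exp (-(r / 2)) := by
  have hpow : r ^ k / k.factorial ≤ 2 ^ k * exp (r / 2) :=
    calc r ^ k / k.factorial = 2 ^ k * ((r / 2) ^ k / k.factorial) := by
          rw [div_pow, mul_div_assoc', mul_div_cancel₀ _ (by positivity)]
      _ ≤ 2 ^ k * exp (r / 2) := by gcongr; exact pow_div_factorial_le_exp _ (by positivity) k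
  calc poissonProb r k = exp (-r) * (r ^ k / k.factorial) := mul_div_assoc _ _ _
    _ ≤ exp (-r) * (2 ^ k * exp (r / 2)) := by gcongr
    _ = 2 ^ k * exp (-(r / 2)) := by rw [mul_left_comm, ← exp_add]; ring_nf

end PoissonProb

theorem add_abs_le_exp (u : ℝ) : u + |u| ≤ exp u := by
  rcases le_or_gt 0 u with hu | hu
  · rw [abs_of_nonneg hu]
    nlinarith [quadratic_le_exp_of_nonneg hu, sq_nonneg (u - 1)]
  · rw [abs_of_neg hu, add_neg_cancel]
    exact (exp_pos u).le

theorem poissonProb_exp_mul_sqrt_exp_le (u : ℝ) (k : ℕ) :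
    poissonProb (exp u) k * √(exp u) ≤ 2 ^ k * exp (-|u| / 2) :=
  calc poissonProb (exp u) k * √(exp u)
      ≤ 2 ^ k * exp (-(exp u / 2)) * exp (u / 2) := by
        rw [← exp_half]
        gcongr
        exact poissonProb_le_two_pow_mul_exp (exp_pos u).le k
    _ = 2 ^ k * exp ((u - exp u) / 2) := by rw [mul_assoc, ← exp_add]; ring_nf
    _ ≤ 2 ^ k * exp (-|u| / 2) := by
        gcongr
        linarith [add_abs_le_exp u]

theorem Real.sqrt_sum_le_sum_sqrt {ι : Type*} (s : Finset ι) {v : ι → ℝ}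
    (hv : ∀ i ∈ s, 0 ≤ v i) : √(∑ i ∈ s, v i) ≤ ∑ i ∈ s, √(v i) := by
  rw [sqrt_le_iff]
  refine ⟨Finset.sum_nonneg fun i _ => sqrt_nonneg _, ?_⟩
  calc ∑ i ∈ s, v i = ∑ i ∈ s, √(v i) ^ 2 :=
        Finset.sum_congr rfl fun i hi => (sq_sqrt (hv i hi)).symm
    _ ≤ (∑ i ∈ s, √(v i)) ^ 2 := Finset.sum_sq_le_sq_sum_of_nonneg fun i _ => sqrt_nonneg _

theorem Finset.prod_le_prod_comp_of_injective {ι m R : Type*} [Fintype ι] [Fintype m]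
    [CommMonoidWithZero R] [Preorder R] [ZeroLEOneClass R] [PosMulMono R] {g : ι → R}
    (hg0 : ∀ i, 0 ≤ g i) (hg1 : ∀ i, g i ≤ 1) {f : m → ι} (hf : Function.Injective f) :
    ∏ i, g i ≤ ∏ r, g (f r) := by
  classical
  rw [← Finset.prod_image hf.injOn]
  exact Finset.prod_le_prod_of_subset_of_le_one (Finset.subset_univ _)
    (fun i _ => hg0 i) fun i _ _ => hg1 i

theorem Matrix.det_weightedGram_eq_sum {R ι m : Type*} [CommRing R] [Fintype ι] [Fintype m]
    [DecidableEq m] (w : ι → R) (a : ι → m → R) :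
    det (of fun r c => ∑ i, w i * a i r * a i c) =
      ∑ f : m → ι, (∏ r, w (f r)) * ((∏ r, a (f r) r) * ((of a).submatrix f id).det) := by
  have hrows : (of fun r c => ∑ i, w i * a i r * a i c) = fun r => ∑ i, (w i * a i r) • a i := by
    ext r c
    simp [Finset.sum_apply, mul_assoc]
  rw [hrows]
  change detRowAlternating.toMultilinearMap _ = _
  rw [MultilinearMap.map_sum]
  refine Finset.sum_congr rfl fun f _ => ?_
  rw [MultilinearMap.map_smul_univ, smul_eq_mul, Finset.prod_mul_distrib, mul_assoc]
  rfl

theorem integrable_exp_neg_abs_div {c : ℝ} (hc : 0 < c) :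
    Integrable fun t : ℝ => exp (-|t| / c) := by
  have h : Integrable fun t : ℝ => exp (-|t|) := by
    rw [← integrableOn_univ, ← Iic_union_Ioi (a := 0)]
    refine ((integrableOn_exp_Iic 0).congr_fun (fun t ht => ?_) measurableSet_Iic).union
      ((integrableOn_exp_neg_Ioi 0).congr_fun (fun t ht => ?_) measurableSet_Ioi)
    · rw [abs_of_nonpos ht, neg_neg]
    · rw [abs_of_pos ht]
  simpa [abs_div, abs_of_pos hc, neg_div] using h.comp_div hc.ne'

theorem MeasureTheory.Integrable.comp_linearMap_of_det_ne_zero {E F : Type*}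
    [NormedAddCommGroup E] [NormedSpace ℝ E] [MeasurableSpace E] [BorelSpace E]
    [FiniteDimensional ℝ E] [NormedAddCommGroup F] {μ : Measure E} [μ.IsAddHaarMeasure]
    {L : E →ₗ[ℝ] E} (hL : LinearMap.det L ≠ 0) {g : E → F} (hg : Integrable g μ) :
    Integrable (fun x => g (L x)) μ := by
  have hmap := Measure.map_linearMap_addHaar_eq_smul_addHaar μ hL
  have hgL : Integrable g (μ.map L) := by
    rw [hmap]
    exact hg.smul_measure ENNReal.ofReal_ne_top
  exact (integrable_map_measure hgL.aestronglyMeasurable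
    L.continuous_of_finiteDimensional.measurable.aemeasurable).mp hgL

theorem integrable_prod_exp_neg_abs_div_affine {m : Type*} [Fintype m] [DecidableEq m]
    {B : Matrix m m ℝ} (hB : B.det ≠ 0) (b : m → ℝ) {c : ℝ} (hc : 0 < c) :
    Integrable fun β : m → ℝ => ∏ r, exp (-|b r + ∑ s, B r s * β s| / c) := by
  have hprod : Integrable fun v : m → ℝ => ∏ r, exp (-|b r + v r| / c) := by
    rw [volume_pi]
    exact Integrable.fintype_prod fun r => (integrable_exp_neg_abs_div hc).comp_add_left (b r)
  simpa [Matrix.toLin'_apply, Matrix.mulVec, dotProduct] using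
    hprod.comp_linearMap_of_det_ne_zero (L := Matrix.toLin' B) (by rwa [LinearMap.det_toLin'])

section

variable {ι m : Type*} [Fintype ι] [Fintype m] [DecidableEq m]

theorem integrable_sum_mul_prod_exp_neg_abs_div (a : ι → m → ℝ) (a0 : ι → ℝ)
    {C : (m → ι) → ℝ} (hC : ∀ f, ((Matrix.of a).submatrix f id).det = 0 → C f = 0)
    {c : ℝ} (hc : 0 < c) :
    Integrable fun β : m → ℝ =>
      ∑ f : m → ι, C f * ∏ r, exp (-|a0 (f r) + ∑ s, a (f r) s * β s| / c) := by
  refine integrable_finsetSum _ fun f _ => ?_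
  by_cases hdet : ((Matrix.of a).submatrix f id).det = 0
  · simp [hC f hdet]
  · exact (integrable_prod_exp_neg_abs_div_affine hdet (a0 ∘ f) hc).const_mul (C f)

theorem prod_poissonProb_mul_sqrt_abs_term_le (a : ι → m → ℝ) (u : ι → ℝ) (x : ι → ℕ)
    (f : m → ι) :
    (∏ i, poissonProb (exp (u i)) (x i)) *
        √|(∏ r, exp (u (f r))) * ((∏ r, a (f r) r) * ((Matrix.of a).submatrix f id).det)| ≤
      (√|(∏ r, a (f r) r) * ((Matrix.of a).submatrix f id).det| * ∏ r, (2 : ℝ) ^ x (f r)) *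
        ∏ r, exp (-|u (f r)| / 2) := by
  set K := (∏ r, a (f r) r) * ((Matrix.of a).submatrix f id).det
  have hp0 (i : ι) : 0 ≤ poissonProb (exp (u i)) (x i) := poissonProb_nonneg (exp_pos _).le _
  by_cases hf : Function.Injective f
  · have hP := Finset.prod_le_prod_comp_of_injective hp0
      (fun i => poissonProb_le_one (exp_pos _).le _) hf
    have hsqrt : √|(∏ r, exp (u (f r))) * K| = (∏ r, √(exp (u (f r)))) * √|K| := by
      rw [abs_mul, abs_of_pos (Finset.prod_pos fun r _ => exp_pos _),
        sqrt_mul (Finset.prod_nonneg fun r _ => (exp_pos _).le),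
        Real.sqrt_prod _ fun r _ => (exp_pos _).le]
    calc _ ≤ (∏ r, poissonProb (exp (u (f r))) (x (f r))) *
            ((∏ r, √(exp (u (f r)))) * √|K|) := by
          rw [hsqrt]
          exact mul_le_mul_of_nonneg_right hP (by positivity)
      _ = (∏ r, poissonProb (exp (u (f r))) (x (f r)) * √(exp (u (f r)))) * √|K| := by
          rw [Finset.prod_mul_distrib, mul_assoc]
      _ ≤ (∏ r, 2 ^ x (f r) * exp (-|u (f r)| / 2)) * √|K| := by
          refine mul_le_mul_of_nonneg_right ?_ (sqrt_nonneg _)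
          exact Finset.prod_le_prod (fun r _ => mul_nonneg (hp0 _) (sqrt_nonneg _))
            fun r _ => poissonProb_exp_mul_sqrt_exp_le _ _
      _ = _ := by rw [Finset.prod_mul_distrib]; ring
  · have hK : K = 0 := by
      obtain ⟨r, s, hrs, hne⟩ : ∃ r s, f r = f s ∧ r ≠ s := by
        simpa [Function.Injective] using hf
      exact mul_eq_zero_of_right _ (Matrix.det_zero_of_row_eq hne (congrArg a hrs))
    simp [hK]

theorem prod_poissonProb_mul_sqrt_det_le (a : ι → m → ℝ) (u : ι → ℝ) (x : ι → ℕ) :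
    (∏ i, poissonProb (exp (u i)) (x i)) *
        √(Matrix.det (Matrix.of fun r c => ∑ i, exp (u i) * a i r * a i c)) ≤
      ∑ f : m → ι,
        (√|(∏ r, a (f r) r) * ((Matrix.of a).submatrix f id).det| * ∏ r, (2 : ℝ) ^ x (f r)) *
          ∏ r, exp (-|u (f r)| / 2) := by
  rw [Matrix.det_weightedGram_eq_sum]
  set t : (m → ι) → ℝ := fun f =>
    (∏ r, exp (u (f r))) * ((∏ r, a (f r) r) * ((Matrix.of a).submatrix f id).det)
  have hsqrt : √(∑ f, t f) ≤ ∑ f, √|t f| :=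
    calc √(∑ f, t f) ≤ √(∑ f, |t f|) := sqrt_le_sqrt (Finset.sum_le_sum fun f _ => le_abs_self _)
      _ ≤ ∑ f, √|t f| := Real.sqrt_sum_le_sum_sqrt _ fun f _ => abs_nonneg _
  calc _ ≤ (∏ i, poissonProb (exp (u i)) (x i)) * ∑ f, √|t f| :=
        mul_le_mul_of_nonneg_left hsqrt
          (Finset.prod_nonneg fun i _ => poissonProb_nonneg (exp_pos _).le _)
    _ = ∑ f, (∏ i, poissonProb (exp (u i)) (x i)) * √|t f| := Finset.mul_sum _ _ _
    _ ≤ _ := Finset.sum_le_sum fun f _ => prod_poissonProb_mul_sqrt_abs_term_le a u x f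

end

theorem poisson_regression_marginal_finite_general (n q : ℕ)
    (a : Fin n → Fin q → ℝ) (a0 : Fin n → ℝ) (x : Fin n → ℕ) :
    (∫⁻ β : Fin q → ℝ,
        ENNReal.ofReal (
          (∏ i, Real.exp (-(Real.exp (a0 i + ∑ r, a i r * β r))) *
            Real.exp (a0 i + ∑ r, a i r * β r) ^ (x i) /
              ((x i).factorial : ℝ)) *
          Real.sqrt (Matrix.det (Matrix.of fun r c : Fin q =>
            ∑ i, Real.exp (a0 i + ∑ r', a i r' * β r') * a i r * a i c)))) ≠ ⊤ := by
  have hdom := integrable_sum_mul_prod_exp_neg_abs_div a a0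
    (C := fun f => √|(∏ r, a (f r) r) * ((Matrix.of a).submatrix f id).det| *
      ∏ r, (2 : ℝ) ^ x (f r)) (fun f hf => by simp [hf]) two_pos
  refine ne_top_of_le_ne_top hdom.lintegral_lt_top.ne
    (lintegral_mono fun β => ENNReal.ofReal_le_ofReal ?_)
  exact prod_poissonProb_mul_sqrt_det_le a (fun i => a0 i + ∑ r, a i r * β r) x

/-- (Theorem 4.1) In the Poisson log-linear regression model with
`λᵢ(β) = exp(a₀ᵢ + aᵢᵀβ)` and full-column-rank design matrix `A`,
the marginal density under the Jeffreys prior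
`π₀ᴿ(β) = det(Σᵢ λᵢ(β) aᵢ aᵢᵀ)^{1/2}` is finite. -/
theorem poisson_regression_marginal_finite (n q : ℕ) (hq : 1 ≤ q)
    (a : Fin n → Fin q → ℝ) (a0 : Fin n → ℝ) (x : Fin n → ℕ)
    (hrank : (Matrix.of a).rank = q) :
    (∫⁻ β : Fin q → ℝ,
        ENNReal.ofReal (
          (∏ i, Real.exp (-(Real.exp (a0 i + ∑ r, a i r * β r))) *
            Real.exp (a0 i + ∑ r, a i r * β r) ^ (x i) /
              ((x i).factorial : ℝ)) *
          Real.sqrt (Matrix.det (Matrix.of fun r c : Fin q =>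
            ∑ i, Real.exp (a0 i + ∑ r', a i r' * β r') * a i r * a i c)))) ≠ ⊤ :=
  poisson_regression_marginal_finite_general n q a a0 x
end

section
/- (Theorem 4.2, Jeffreys prior case) Consider the ZIP log-linear regression model with λᵢ(β) = exp(a₀ᵢ + aᵢᵀβ), β ∈ ℝ^q, and counts x₁ = ⋯ = x_k = 0 and xᵢ ≥ 1 for i = k+1,…,n, where 0 ≤ k < n. Assume the n×q matrix A with rows aᵢᵀ has rank q, and that for each j = 1,…,k the covariate vector a_j can be written as a_j = Σ_{m=k+1}^n c_{mj} a_m with all coefficients c_{mj} ≥ 0. Then the marginal density under the Jeffreys prior π₀ᴿ(β) = det(Σ_{i=1}^n λᵢ(β) aᵢ aᵢᵀ)^{1/2} and independent uniform prior on p is finite: ∫_{ℝ^q} ∫₀^1 Π_{i=1}^k (p + (1−p)e^{−λᵢ(β)}) · (1−p)^{n−k} · Π_{i=k+1}^n (e^{−λᵢ(β)} λᵢ(β)^{xᵢ}/xᵢ!) · π₀ᴿ(β) dp dβ < ∞. -/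
/-!
Integrating out `p` costs nothing, because the zero-inflation factor
`∏ (p + (1 - p) e^{-λᵢ}) (1 - p)^{n-k}` lies in `[0, 1]`. Write `Lᵢ = a₀ᵢ + aᵢᵀβ`, so `λᵢ = e^{Lᵢ}`.
The Poisson likelihood of the positive counts is at most `P(β) = ∏_{i ≥ k} exp (xᵢ Lᵢ - e^{Lᵢ})`,
and since the entries of the Fisher matrix are `O(Σ λᵢ)`, the Jeffreys prior is
`O(1 + Σⱼ e^{q Lⱼ})`. By the cone condition each `Lⱼ` is a constant plus a nonnegative combination of
the `Lᵢ` with `i ≥ k`, so every term `e^{q Lⱼ} P(β)` is again a constant times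
`∏_{i ≥ k} exp (tᵢ Lᵢ - e^{Lᵢ})` with all `tᵢ > 0`. Such a product is integrable: by the rank
condition `q` of the rows `aᵢ`, `i ≥ k`, form a basis; the other factors are bounded by
`exp (t log t - t)`, and the linear change of variables to the `q` chosen predictors leaves a product
of the one-dimensional integrals `∫ exp (t u - eᵘ) du = Γ(t)`.
-/

open MeasureTheory Real Set Matrix

theorem mul_sub_exp_le {t : ℝ} (ht : 0 < t) (u : ℝ) : t * u - exp u ≤ t * log t - t := by
  have h := add_one_le_exp (u - log t)
  rw [exp_sub, exp_log ht, le_div_iff₀ ht] at h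
  linarith

theorem integrable_exp_mul_sub_exp {t : ℝ} (ht : 0 < t) :
    Integrable fun u : ℝ => exp (t * u - exp u) := by
  have hcont : Continuous fun u : ℝ => exp (t * u - exp u) := by fun_prop
  rw [← integrableOn_univ, ← Iic_union_Ioi (a := 0)]
  refine IntegrableOn.union ?_ ?_
  · refine (integrableOn_exp_mul_Iic ht 0).mono' hcont.aestronglyMeasurable.restrict
      (ae_of_all _ fun u => ?_)
    rw [norm_of_nonneg (exp_pos _).le]
    exact exp_le_exp.2 (by linarith [exp_pos u])
  · have hdecay (u : ℝ) : t * u - exp u ≤ ((t + 1) * log (t + 1) - (t + 1)) + -1 * u := by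
      linarith [mul_sub_exp_le (t := t + 1) (by linarith) u]
    refine ((integrableOn_exp_mul_Ioi (by norm_num : (-1 : ℝ) < 0) 0).const_mul
      (exp ((t + 1) * log (t + 1) - (t + 1)))).mono' hcont.aestronglyMeasurable.restrict
      (ae_of_all _ fun u => ?_)
    rw [norm_of_nonneg (exp_pos _).le, ← exp_add]
    exact exp_le_exp.2 (hdecay u)

theorem integrable_prod_comp_mulVec {ι : Type*} [Fintype ι] [DecidableEq ι] {A : Matrix ι ι ℝ}
    (hA : A.det ≠ 0) {g : ι → ℝ → ℝ} (hg : ∀ i, Integrable (g i)) :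
    Integrable fun β : ι → ℝ => ∏ i, g i ((A *ᵥ β) i) := by
  have hmap : Integrable (fun y : ι → ℝ => ∏ i, g i (y i)) (Measure.map (toLin' A) volume) := by
    rw [Real.map_matrix_volume_pi_eq_smul_volume_pi hA]
    exact (Integrable.fintype_prod hg).smul_measure ENNReal.ofReal_ne_top
  exact hmap.comp_measurable (LinearMap.continuous_of_finiteDimensional _).measurable

theorem span_range_eq_top_of_rank_eq {K m : Type*} [Field K] [Finite m] {q : ℕ}
    {a : m → Fin q → K} (h : (Matrix.of a).rank = q) : Submodule.span K (range a) = ⊤ :=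
  Submodule.eq_top_of_finrank_eq <| by
    rw [Module.finrank_fin_fun]
    exact (Matrix.of a).rank_eq_finrank_span_row.symm.trans h

theorem span_image_eq_top_of_forall_eq_sum {K V ι : Type*} [Field K] [AddCommGroup V]
    [Module K V] {a : ι → V} (htop : Submodule.span K (range a) = ⊤) {S : Finset ι}
    (h : ∀ j, ∃ c : ι → K, a j = ∑ m ∈ S, c m • a m) : Submodule.span K (a '' S) = ⊤ := by
  rw [eq_top_iff, ← htop, Submodule.span_le]
  rintro _ ⟨j, rfl⟩
  obtain ⟨c, hc⟩ := h j
  rw [hc]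
  exact Submodule.sum_mem _ fun m hm => Submodule.smul_mem _ _ (Submodule.subset_span ⟨m, hm, rfl⟩)

theorem exists_linearIndependent_comp_of_span_image_eq_top {K V ι : Type*} [DivisionRing K]
    [AddCommGroup V] [Module K V] [FiniteDimensional K V] {q : ℕ} (hq : Module.finrank K V = q)
    {a : ι → V} {S : Set ι} (hS : Submodule.span K (a '' S) = ⊤) :
    ∃ e : Fin q → ι, (∀ r, e r ∈ S) ∧ LinearIndependent K (a ∘ e) := by
  obtain ⟨f, hfS, -, hf⟩ := Submodule.exists_fun_fin_finrank_span_eq K (a '' S)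
  have hd : Module.finrank K (Submodule.span K (a '' S)) = q := by rw [hS, finrank_top, hq]
  choose e heS hae using fun r => hfS (Fin.cast hd.symm r)
  have hae' : a ∘ e = f ∘ Fin.cast hd.symm := funext hae
  exact ⟨e, heS, hae' ▸ hf.comp _ (Fin.cast_injective _)⟩

theorem exists_nonneg_eq_sum_smul {ι : Type*} [Fintype ι] [DecidableEq ι] {q : ℕ}
    {a : ι → Fin q → ℝ} {S : Finset ι}
    (hcone : ∀ j ∉ S, ∃ c : ι → ℝ, (∀ m, 0 ≤ c m) ∧ (∀ m ∉ S, c m = 0) ∧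
      ∀ r, a j r = ∑ m, c m * a m r) (j : ι) :
    ∃ c : ι → ℝ, (∀ m ∈ S, 0 ≤ c m) ∧ a j = ∑ m ∈ S, c m • a m := by
  by_cases hj : j ∈ S
  · refine ⟨fun m => if m = j then 1 else 0, fun m _ => by positivity, ?_⟩
    simp [ite_smul, Finset.sum_ite_eq', hj]
  · obtain ⟨c, hc0, hcS, hca⟩ := hcone j hj
    refine ⟨c, fun m _ => hc0 m, funext fun r => ?_⟩
    rw [hca r, Finset.sum_apply, ← Finset.sum_subset S.subset_univ fun m _ hm => by simp [hcS m hm]]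
    simp

section LinearPredictor

variable {ι : Type*} {q : ℕ} {a : ι → Fin q → ℝ} {a0 : ι → ℝ} {S : Finset ι} {t : ι → ℝ}

theorem integrable_prod_exp_mul_sub_exp (hS : Submodule.span ℝ (a '' S) = ⊤)
    (ht : ∀ i ∈ S, 0 < t i) :
    Integrable fun β : Fin q → ℝ =>
      ∏ i ∈ S, exp (t i * (a0 i + a i ⬝ᵥ β) - exp (a0 i + a i ⬝ᵥ β)) := by
  classical
  obtain ⟨e, heS, hli⟩ :=
    exists_linearIndependent_comp_of_span_image_eq_top (Module.finrank_fin_fun ℝ) hS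
  set A : Matrix (Fin q) (Fin q) ℝ := Matrix.of (a ∘ e)
  have hA : A.det ≠ 0 :=
    ((isUnit_iff_isUnit_det A).1 (linearIndependent_rows_iff_isUnit.1 hli)).ne_zero
  have he : Function.Injective e := hli.injective.of_comp
  set f : ι → ℝ → ℝ := fun i u => exp (t i * (a0 i + u) - exp (a0 i + u))
  have hf_le (i : ι) (hi : i ∈ S) (u : ℝ) : f i u ≤ exp (t i * log (t i) - t i) :=
    exp_le_exp.2 (by linarith [mul_sub_exp_le (ht i hi) (a0 i + u)])
  have hTS : Finset.univ.image e ⊆ S := Finset.image_subset_iff.2 fun r _ => heS r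
  have hbound (β : Fin q → ℝ) : ∏ i ∈ S, f i (a i ⬝ᵥ β) ≤
      (∏ i ∈ S \ Finset.univ.image e, exp (t i * log (t i) - t i)) *
        ∏ r, f (e r) ((A *ᵥ β) r) := by
    rw [← Finset.prod_sdiff hTS, Finset.prod_image fun r _ r' _ h => he h]
    gcongr with i hi
    · exact hf_le i (Finset.mem_sdiff.1 hi).1 _
    · rfl
  refine ((integrable_prod_comp_mulVec hA fun r =>
    (integrable_exp_mul_sub_exp (ht _ (heS r))).comp_add_left (a0 (e r))).const_mul
      (∏ i ∈ S \ Finset.univ.image e, exp (t i * log (t i) - t i))).mono'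
      (Continuous.aestronglyMeasurable (by fun_prop)) (ae_of_all _ fun β => ?_)
  rw [norm_of_nonneg (Finset.prod_nonneg fun i _ => (exp_pos _).le)]
  exact hbound β

theorem integrable_exp_mul_mul_prod_exp_mul_sub_exp (hS : Submodule.span ℝ (a '' S) = ⊤)
    (ht : ∀ i ∈ S, 0 < t i) {j : ι} {c : ι → ℝ} (hc : ∀ m ∈ S, 0 ≤ c m)
    (hj : a j = ∑ m ∈ S, c m • a m) {s : ℝ} (hs : 0 ≤ s) :
    Integrable fun β : Fin q → ℝ => exp (s * (a0 j + a j ⬝ᵥ β)) *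
      ∏ i ∈ S, exp (t i * (a0 i + a i ⬝ᵥ β) - exp (a0 i + a i ⬝ᵥ β)) := by
  have hpred (β : Fin q → ℝ) : a0 j + a j ⬝ᵥ β =
      (a0 j - ∑ m ∈ S, c m * a0 m) + ∑ m ∈ S, c m * (a0 m + a m ⬝ᵥ β) := by
    simp only [hj, sum_dotProduct, smul_dotProduct, smul_eq_mul, mul_add, Finset.sum_add_distrib]
    ring
  have hfactor (β : Fin q → ℝ) : exp (s * (a0 j + a j ⬝ᵥ β)) *
      ∏ i ∈ S, exp (t i * (a0 i + a i ⬝ᵥ β) - exp (a0 i + a i ⬝ᵥ β)) =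
      exp (s * (a0 j - ∑ m ∈ S, c m * a0 m)) *
        ∏ i ∈ S, exp ((t i + s * c i) * (a0 i + a i ⬝ᵥ β) - exp (a0 i + a i ⬝ᵥ β)) := by
    simp only [hpred β, ← exp_sum, ← exp_add, mul_add, add_mul, Finset.mul_sum,
      Finset.sum_sub_distrib, Finset.sum_add_distrib]
    ring_nf
  simp only [hfactor]
  exact (integrable_prod_exp_mul_sub_exp hS fun i hi =>
    add_pos_of_pos_of_nonneg (ht i hi) (mul_nonneg hs (hc i hi))).const_mul _

end LinearPredictor

open Finset in
theorem pow_sum_le_one_add_card_pow_mul {ι : Type*} (s : Finset ι) {f : ι → ℝ}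
    (hf : ∀ i ∈ s, 0 ≤ f i) (q : ℕ) :
    (∑ i ∈ s, f i) ^ q ≤ (1 + #s) ^ q * (1 + ∑ i ∈ s, f i ^ q) := by
  cases q with
  | zero => simp
  | succ m =>
    have hcard : (#s : ℝ) ^ m ≤ (1 + #s) ^ (m + 1) :=
      calc (#s : ℝ) ^ m ≤ (1 + #s) ^ m := by gcongr; linarith
        _ ≤ (1 + #s) ^ (m + 1) := pow_le_pow_right₀ (by simp) m.le_succ
    calc (∑ i ∈ s, f i) ^ (m + 1) ≤ #s ^ m * ∑ i ∈ s, f i ^ (m + 1) :=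
          pow_sum_le_card_mul_sum_pow hf m
      _ ≤ (1 + #s) ^ (m + 1) * (1 + ∑ i ∈ s, f i ^ (m + 1)) :=
          mul_le_mul hcard (by linarith) (sum_nonneg fun i hi => pow_nonneg (hf i hi) _)
            (by positivity)

theorem exists_sqrt_det_weighted_gram_le {ι : Type*} [Fintype ι] {q : ℕ} (a : ι → Fin q → ℝ) :
    ∃ C, ∀ lam : ι → ℝ, (∀ i, 0 ≤ lam i) →
      sqrt (Matrix.of fun r c => ∑ i, lam i * a i r * a i c).det ≤ C * (1 + ∑ i, lam i ^ q) := by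
  set K := ∑ i, ‖a i‖
  have hK0 : 0 ≤ K := Finset.sum_nonneg fun i _ => norm_nonneg _
  have hK (i : ι) (r : Fin q) : |a i r| ≤ K :=
    (norm_le_pi_norm (a i) r).trans
      (Finset.single_le_sum (fun i _ => norm_nonneg (a i)) (Finset.mem_univ i))
  set B : ℝ := q.factorial * K ^ (2 * q) * (1 + Fintype.card ι) ^ q
  refine ⟨1 + B, fun lam hlam => ?_⟩
  set M : Matrix (Fin q) (Fin q) ℝ := Matrix.of fun r c => ∑ i, lam i * a i r * a i c
  have hentry (r c : Fin q) : |M r c| ≤ K ^ 2 * ∑ i, lam i := by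
    rw [Finset.mul_sum]
    refine (Finset.abs_sum_le_sum_abs _ _).trans (Finset.sum_le_sum fun i _ => ?_)
    rw [abs_mul, abs_mul, abs_of_nonneg (hlam i), sq, mul_comm (K * K), mul_assoc]
    exact mul_le_mul_of_nonneg_left (mul_le_mul (hK i r) (hK i c) (abs_nonneg _) hK0) (hlam i)
  have hdet : |M.det| ≤ B * (1 + ∑ i, lam i ^ q) :=
    calc |M.det| ≤ q.factorial * (K ^ 2 * ∑ i, lam i) ^ q := by
          simpa [nsmul_eq_mul] using det_le (abv := AbsoluteValue.abs) hentry
      _ = q.factorial * K ^ (2 * q) * (∑ i, lam i) ^ q := by ring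
      _ ≤ q.factorial * K ^ (2 * q) * ((1 + Fintype.card ι) ^ q * (1 + ∑ i, lam i ^ q)) := by
          gcongr
          simpa using pow_sum_le_one_add_card_pow_mul Finset.univ (fun i _ => hlam i) q
      _ = B * (1 + ∑ i, lam i ^ q) := (mul_assoc _ _ _).symm
  have hsum : 0 ≤ ∑ i, lam i ^ q := Finset.sum_nonneg fun i _ => pow_nonneg (hlam i) q
  have hB : 0 ≤ B := by positivity
  calc sqrt M.det ≤ sqrt |M.det| := sqrt_le_sqrt (le_abs_self _)
    _ ≤ 1 + |M.det| := sqrt_le_iff.2 ⟨by positivity, by nlinarith [abs_nonneg M.det]⟩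
    _ ≤ (1 + B) * (1 + ∑ i, lam i ^ q) := by nlinarith

theorem prod_add_one_sub_mul_exp_neg_mul_pow_le_one {ι : Type*} (s : Finset ι) {lam : ι → ℝ}
    (hlam : ∀ i ∈ s, 0 ≤ lam i) {p : ℝ} (hp0 : 0 ≤ p) (hp1 : p ≤ 1) (m : ℕ) :
    (∏ i ∈ s, (p + (1 - p) * exp (-lam i))) * (1 - p) ^ m ≤ 1 := by
  have hexp (i : ι) (hi : i ∈ s) : exp (-lam i) ≤ 1 := exp_le_one_iff.2 (by linarith [hlam i hi])
  refine mul_le_one₀ (Finset.prod_le_one (fun i _ => ?_) fun i hi => ?_)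
    (pow_nonneg (by linarith) m) (pow_le_one₀ (by linarith) (by linarith))
  · nlinarith [exp_pos (-lam i)]
  · nlinarith [hexp i hi]

theorem setLIntegral_Ioc_zero_one_ofReal_mul_le {h : ℝ → ℝ} {W : ℝ} (hW : 0 ≤ W)
    (hh : ∀ p ∈ Ioc (0 : ℝ) 1, h p ≤ 1) :
    ∫⁻ p in Ioc (0 : ℝ) 1, ENNReal.ofReal (h p * W) ≤ ENNReal.ofReal W :=
  calc ∫⁻ p in Ioc (0 : ℝ) 1, ENNReal.ofReal (h p * W)
      ≤ ∫⁻ _ in Ioc (0 : ℝ) 1, ENNReal.ofReal W :=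
        setLIntegral_mono' measurableSet_Ioc fun p hp =>
          ENNReal.ofReal_le_ofReal (mul_le_of_le_one_left hW (hh p hp))
    _ = ENNReal.ofReal W := by simp [Real.volume_Ioc]

theorem exp_neg_exp_mul_exp_pow_div_factorial_le (u : ℝ) (x : ℕ) :
    exp (-exp u) * exp u ^ x / x.factorial ≤ exp (x * u - exp u) :=
  calc exp (-exp u) * exp u ^ x / x.factorial ≤ exp (-exp u) * exp u ^ x :=
        div_le_self (by positivity) (mod_cast x.factorial_pos)
    _ = exp (x * u - exp u) := by rw [← exp_nat_mul, ← exp_add, neg_add_eq_sub]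

theorem zip_regression_marginal_finite_jeffreys_general (n q k : ℕ)
    (a : Fin n → Fin q → ℝ) (a0 : Fin n → ℝ) (x : Fin n → ℕ)
    (hx1 : ∀ i : Fin n, k ≤ (i : ℕ) → 1 ≤ x i)
    (hrank : (Matrix.of a).rank = q)
    (hcone : ∀ j : Fin n, (j : ℕ) < k → ∃ c : Fin n → ℝ,
      (∀ m, 0 ≤ c m) ∧ (∀ m : Fin n, (m : ℕ) < k → c m = 0) ∧
      ∀ r, a j r = ∑ m, c m * a m r) :
    (∫⁻ β : Fin q → ℝ, ∫⁻ p in Set.Ioc (0 : ℝ) 1,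
        ENNReal.ofReal (
          (∏ i ∈ Finset.univ.filter (fun i : Fin n => (i : ℕ) < k),
            (p + (1 - p) * Real.exp (-(Real.exp (a0 i + ∑ r, a i r * β r))))) *
          (1 - p) ^ (n - k) *
          (∏ i ∈ Finset.univ.filter (fun i : Fin n => k ≤ (i : ℕ)),
            Real.exp (-(Real.exp (a0 i + ∑ r, a i r * β r))) *
              Real.exp (a0 i + ∑ r, a i r * β r) ^ (x i) /
                ((x i).factorial : ℝ)) *
          Real.sqrt (Matrix.det (Matrix.of fun r c : Fin q =>
            ∑ i, Real.exp (a0 i + ∑ r', a i r' * β r') * a i r * a i c)))) ≠ ⊤ := by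
  set S := Finset.univ.filter fun i : Fin n => k ≤ (i : ℕ)
  have hcomb (j : Fin n) : ∃ c : Fin n → ℝ, (∀ m ∈ S, 0 ≤ c m) ∧ a j = ∑ m ∈ S, c m • a m :=
    exists_nonneg_eq_sum_smul (fun j hj => by simpa [S] using hcone j (by simpa [S] using hj)) j
  have hS : Submodule.span ℝ (a '' S) = ⊤ :=
    span_image_eq_top_of_forall_eq_sum (span_range_eq_top_of_rank_eq hrank)
      fun j => (hcomb j).imp fun _ => And.right
  have hx (i : Fin n) (hi : i ∈ S) : (0 : ℝ) < x i := mod_cast hx1 i (Finset.mem_filter.1 hi).2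
  obtain ⟨C, hC⟩ := exists_sqrt_det_weighted_gram_le a
  set P : (Fin q → ℝ) → ℝ := fun β =>
    ∏ i ∈ S, exp (x i * (a0 i + a i ⬝ᵥ β) - exp (a0 i + a i ⬝ᵥ β))
  have hG : Integrable fun β => C * (P β + ∑ j, exp (q * (a0 j + a j ⬝ᵥ β)) * P β) :=
    ((integrable_prod_exp_mul_sub_exp hS hx).add (integrable_finsetSum _ fun j _ =>
      (hcomb j).elim fun _ hc =>
        integrable_exp_mul_mul_prod_exp_mul_sub_exp hS hx hc.1 hc.2 q.cast_nonneg)).const_mul C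
  refine ne_top_of_le_ne_top hG.lintegral_lt_top.ne (lintegral_mono fun β => ?_)
  have hpoisson : ∏ i ∈ S, exp (-exp (a0 i + a i ⬝ᵥ β)) * exp (a0 i + a i ⬝ᵥ β) ^ x i /
      (x i).factorial ≤ P β :=
    Finset.prod_le_prod (fun i _ => by positivity) fun i _ =>
      exp_neg_exp_mul_exp_pow_div_factorial_le _ _
  have hjeffreys := hC (fun i => exp (a0 i + a i ⬝ᵥ β)) fun i => (exp_pos _).le
  simp only [mul_assoc _ _ (sqrt _)]
  refine (setLIntegral_Ioc_zero_one_ofReal_mul_le (by positivity) fun p hp =>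
    prod_add_one_sub_mul_exp_neg_mul_pow_le_one _ (fun i _ => (exp_pos _).le) hp.1.le hp.2 _).trans
    (ENNReal.ofReal_le_ofReal ?_)
  calc _ ≤ P β * (C * (1 + ∑ j, exp (a0 j + a j ⬝ᵥ β) ^ q)) :=
        mul_le_mul hpoisson hjeffreys (sqrt_nonneg _) (by positivity)
    _ = C * (P β + ∑ j, exp (q * (a0 j + a j ⬝ᵥ β)) * P β) := by
        simp_rw [exp_nat_mul, ← Finset.sum_mul]
        ring

/-- (Theorem 4.2, Jeffreys prior case) In the ZIP log-linear regression model with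
`λᵢ(β) = exp(a₀ᵢ + aᵢᵀβ)`, zero counts at indices `i < k` and positive counts at
indices `i ≥ k`, if the design matrix `A` has rank `q` and each covariate vector
of a zero count is a nonnegative linear combination of the covariate vectors of
the positive counts, then the marginal density under the Jeffreys prior
`π₀ᴿ(β) = det(Σ_{i=1}^n λᵢ(β) aᵢ aᵢᵀ)^{1/2}` and an independent uniform prior
on `p` is finite. -/
theorem zip_regression_marginal_finite_jeffreys (n q k : ℕ) (hq : 1 ≤ q) (hk : k < n)
    (a : Fin n → Fin q → ℝ) (a0 : Fin n → ℝ) (x : Fin n → ℕ)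
    (hx0 : ∀ i : Fin n, (i : ℕ) < k → x i = 0)
    (hx1 : ∀ i : Fin n, k ≤ (i : ℕ) → 1 ≤ x i)
    (hrank : (Matrix.of a).rank = q)
    (hcone : ∀ j : Fin n, (j : ℕ) < k → ∃ c : Fin n → ℝ,
      (∀ m, 0 ≤ c m) ∧ (∀ m : Fin n, (m : ℕ) < k → c m = 0) ∧
      ∀ r, a j r = ∑ m, c m * a m r) :
    (∫⁻ β : Fin q → ℝ, ∫⁻ p in Set.Ioc (0 : ℝ) 1,
        ENNReal.ofReal (
          (∏ i ∈ Finset.univ.filter (fun i : Fin n => (i : ℕ) < k),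
            (p + (1 - p) * Real.exp (-(Real.exp (a0 i + ∑ r, a i r * β r))))) *
          (1 - p) ^ (n - k) *
          (∏ i ∈ Finset.univ.filter (fun i : Fin n => k ≤ (i : ℕ)),
            Real.exp (-(Real.exp (a0 i + ∑ r, a i r * β r))) *
              Real.exp (a0 i + ∑ r, a i r * β r) ^ (x i) /
                ((x i).factorial : ℝ)) *
          Real.sqrt (Matrix.det (Matrix.of fun r c : Fin q =>
            ∑ i, Real.exp (a0 i + ∑ r', a i r' * β r') * a i r * a i c)))) ≠ ⊤ :=
  zip_regression_marginal_finite_jeffreys_general n q k a a0 x hx1 hrank hcone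
end

section
/- (Theorem 4.2, modified Jeffreys prior case) Consider the ZIP log-linear regression model with λᵢ(β) = exp(a₀ᵢ + aᵢᵀβ), β ∈ ℝ^q, and counts x₁ = ⋯ = x_k = 0 and xᵢ ≥ 1 for i = k+1,…,n, where 0 ≤ k < n. Assume the (n−k)×q matrix A₊ with rows a_{k+1}ᵀ,…,a_nᵀ has rank q. Then the marginal density under the modified Jeffreys prior π₁ᴿ(β) = det(Σ_{i=k+1}^n λᵢ(β) aᵢ aᵢᵀ)^{1/2} and independent uniform prior on p is finite: ∫_{ℝ^q} ∫₀^1 Π_{i=1}^k (p + (1−p)e^{−λᵢ(β)}) · (1−p)^{n−k} · Π_{i=k+1}^n (e^{−λᵢ(β)} λᵢ(β)^{xᵢ}/xᵢ!) · π₁ᴿ(β) dp dβ < ∞. -/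
/-! The `p`-dependent factors (the zero-inflated probabilities `p + (1 - p) e^{-λᵢ}` of the zero
counts and `(1 - p)^(n - k)`) lie in `[0, 1]`, so the inner integral is at most `L(β) π₁ᴿ(β)`,
with `L` the Poisson likelihood of the positive counts. The information matrix is entrywise
`O(Σ λᵢ)`, hence `π₁ᴿ(β) = O(exp (Σ λᵢ / 4))`, while each Poisson factor with `xᵢ ≥ 1` is
`O(λᵢ e^{-λᵢ/2})`. As `log λ - λ / 4 ≤ 8 - |log λ|`, the product is `O(exp (-Σ |log λᵢ|))`.
Since `A₊` has full column rank, `Σ |log λᵢ| ≥ ε ‖β‖ - C`, and `exp (-ε ‖β‖)` is integrable. -/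

open MeasureTheory Real Set

open Nat in
theorem pow_le_factorial_div_pow_mul_exp (m : ℕ) {c t : ℝ} (hc : 0 < c) (ht : 0 ≤ t) :
    t ^ m ≤ m ! / c ^ m * exp (c * t) := by
  have h := pow_div_factorial_le_exp (x := c * t) (by positivity) m
  rw [mul_pow, div_le_iff₀ (by positivity)] at h
  rw [div_mul_eq_mul_div, le_div_iff₀ (by positivity)]
  linarith

open Nat in
theorem exp_neg_mul_pow_div_factorial_le {t : ℝ} (ht : 0 ≤ t) {x : ℕ} (hx : 1 ≤ x) :
    exp (-t) * t ^ x / x ! ≤ 2 ^ (x - 1) * (t * exp (-(t / 2))) := by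
  obtain ⟨y, rfl⟩ := Nat.exists_eq_add_of_le' hx
  have hpow : t ^ y ≤ y ! * 2 ^ y * exp (t / 2) := by
    simpa [div_eq_mul_inv, mul_comm] using
      pow_le_factorial_div_pow_mul_exp y (c := 1 / 2) (by norm_num) ht
  have hfac : (y ! : ℝ) ≤ (y + 1) ! := by exact_mod_cast Nat.factorial_le (Nat.le_succ y)
  have hexp : exp (-t) * exp (t / 2) = exp (-(t / 2)) := by rw [← exp_add]; ring_nf
  rw [Nat.add_sub_cancel]
  calc exp (-t) * t ^ (y + 1) / (y + 1)! ≤ exp (-t) * t ^ (y + 1) / y ! := by gcongr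
    _ = exp (-t) * t * t ^ y / y ! := by ring
    _ ≤ exp (-t) * t * (y ! * 2 ^ y * exp (t / 2)) / y ! := by gcongr
    _ = 2 ^ y * (t * exp (-(t / 2))) := by
      rw [← hexp]; field_simp

theorem sub_exp_div_four_le (L : ℝ) : L - exp L / 4 ≤ 8 - |L| := by
  rcases le_or_gt L 0 with h | h
  · rw [abs_of_nonpos h]
    linarith [exp_pos L]
  · rw [abs_of_pos h]
    nlinarith [quadratic_le_exp_of_nonneg h.le, sq_nonneg (L - 8)]

open Nat in
theorem exp_neg_mul_le_mul_one_add_rpow_neg {ε : ℝ} (hε : 0 < ε) (N : ℕ) :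
    ∃ C, ∀ t, 0 ≤ t → exp (-(ε * t)) ≤ C * (1 + t) ^ (-(N : ℝ)) := by
  refine ⟨N ! / ε ^ N * exp ε, fun t ht => ?_⟩
  have hpow := pow_le_factorial_div_pow_mul_exp N hε (by linarith : 0 ≤ 1 + t)
  rw [mul_add, mul_one, exp_add] at hpow
  rw [rpow_neg (by linarith), rpow_natCast, ← div_eq_mul_inv, le_div_iff₀ (by positivity)]
  calc exp (-(ε * t)) * (1 + t) ^ N
      ≤ exp (-(ε * t)) * (N ! / ε ^ N * (exp ε * exp (ε * t))) := by gcongr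
    _ = N ! / ε ^ N * exp ε := by
      rw [show exp (-(ε * t)) * (N ! / ε ^ N * (exp ε * exp (ε * t))) =
        N ! / ε ^ N * exp ε * (exp (-(ε * t)) * exp (ε * t)) by ring, ← exp_add]
      simp

theorem integrable_exp_neg_mul_norm {E : Type*} [NormedAddCommGroup E] [NormedSpace ℝ E]
    [FiniteDimensional ℝ E] [MeasurableSpace E] [BorelSpace E] (μ : Measure E)
    [μ.IsAddHaarMeasure] {ε : ℝ} (hε : 0 < ε) :
    Integrable (fun x : E => exp (-(ε * ‖x‖))) μ := by
  obtain ⟨C, hC⟩ := exp_neg_mul_le_mul_one_add_rpow_neg hε (Module.finrank ℝ E + 1)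
  have hdom : Integrable
      (fun x : E => C * (1 + ‖x‖) ^ (-((Module.finrank ℝ E + 1 : ℕ) : ℝ))) μ :=
    (integrable_one_add_norm (by push_cast; linarith)).const_mul C
  refine hdom.mono' (by fun_prop) (ae_of_all _ fun x => ?_)
  rw [norm_of_nonneg (exp_pos _).le]
  exact hC _ (norm_nonneg x)

open Nat in
theorem poisson_pmf_exp_mul_exp_div_four_le (L : ℝ) {x : ℕ} (hx : 1 ≤ x) :
    exp (-exp L) * exp L ^ x / x ! * exp (exp L / 4) ≤ 2 ^ (x - 1) * exp 8 * exp (-|L|) := by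
  calc exp (-exp L) * exp L ^ x / x ! * exp (exp L / 4)
      ≤ 2 ^ (x - 1) * (exp L * exp (-(exp L / 2))) * exp (exp L / 4) := by
        gcongr; exact exp_neg_mul_pow_div_factorial_le (exp_pos L).le hx
    _ = 2 ^ (x - 1) * exp (L - exp L / 4) := by
        rw [mul_assoc, mul_assoc, ← exp_add, ← exp_add]; ring_nf
    _ ≤ 2 ^ (x - 1) * exp (8 + -|L|) := by gcongr; linarith [sub_exp_div_four_le L]
    _ = 2 ^ (x - 1) * exp 8 * exp (-|L|) := by rw [exp_add, mul_assoc]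

theorem zero_inflated_zero_prob_mem_Icc {p : ℝ} (hp : p ∈ Icc 0 1) (t : ℝ) (ht : 0 ≤ t) :
    p + (1 - p) * exp (-t) ∈ Icc 0 1 := by
  have h0 : 0 < exp (-t) := exp_pos _
  have h1 : exp (-t) ≤ 1 := exp_le_one_iff.2 (by linarith)
  constructor <;> nlinarith [hp.1, hp.2]

namespace Matrix

theorem ker_mulVecLin_eq_bot_of_rank_eq {m n : Type*} [Fintype n] {A : Matrix m n ℝ}
    (hA : A.rank = Fintype.card n) :
    LinearMap.ker A.mulVecLin = ⊥ := by
  have h := LinearMap.finrank_range_add_finrank_ker A.mulVecLin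
  rw [← rank, hA, Module.finrank_fintype_fun_eq_card] at h
  exact Submodule.finrank_eq_zero.mp (by omega)

variable {m n : Type*} [Fintype m] [Fintype n]

theorem exists_pos_mul_norm_le_sum_abs_add {A : Matrix m n ℝ}
    (hA : LinearMap.ker A.mulVecLin = ⊥) (a0 : m → ℝ) :
    ∃ ε > 0, ∀ β : n → ℝ, ε * ‖β‖ ≤ ∑ i, |a0 i + (A *ᵥ β) i| + ∑ i, |a0 i| := by
  obtain ⟨K, hK, hKA⟩ := A.mulVecLin.exists_antilipschitzWith hA
  refine ⟨(K : ℝ)⁻¹, by positivity, fun β => ?_⟩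
  have hβ : ‖β‖ ≤ K * ‖A *ᵥ β‖ := by simpa using hKA.le_mul_dist β 0
  have hAβ : ‖A *ᵥ β‖ ≤ ∑ i, |(A *ᵥ β) i| :=
    (pi_norm_le_iff_of_nonneg (by positivity)).2 fun i =>
      Finset.single_le_sum (f := fun j => |(A *ᵥ β) j|) (fun _ _ => abs_nonneg _)
        (Finset.mem_univ i)
  have htri : ∑ i, |(A *ᵥ β) i| ≤ ∑ i, |a0 i + (A *ᵥ β) i| + ∑ i, |a0 i| := by
    rw [← Finset.sum_add_distrib]
    gcongr with i
    simpa using abs_sub (a0 i + (A *ᵥ β) i) (a0 i)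
  rw [inv_mul_le_iff₀ (by positivity)]
  calc ‖β‖ ≤ K * ‖A *ᵥ β‖ := hβ
    _ ≤ _ := by gcongr; exact hAβ.trans htri

open Nat in
theorem det_weighted_gram_le [DecidableEq n] {A : Matrix m n ℝ} {K : ℝ}
    (hK : ∀ i r c, |A i r * A i c| ≤ K) {w : m → ℝ} (hw : ∀ i, 0 ≤ w i) :
    det (of fun r c => ∑ i, w i * A i r * A i c) ≤
      (Fintype.card n)! * (K * ∑ i, w i) ^ Fintype.card n := by
  have hentry : ∀ r c, |(of fun r c => ∑ i, w i * A i r * A i c) r c| ≤ K * ∑ i, w i := by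
    intro r c
    calc |∑ i, w i * A i r * A i c| ≤ ∑ i, |w i * A i r * A i c| := Finset.abs_sum_le_sum_abs _ _
      _ = ∑ i, w i * |A i r * A i c| := by
        simp_rw [mul_assoc, abs_mul, abs_of_nonneg (hw _)]
      _ ≤ ∑ i, w i * K := by gcongr with i; exacts [hw i, hK i r c]
      _ = K * ∑ i, w i := by rw [Finset.mul_sum]; simp_rw [mul_comm]
  have := det_le (abv := (AbsoluteValue.abs : AbsoluteValue ℝ ℝ)) hentry
  simp only [AbsoluteValue.abs_apply, nsmul_eq_mul] at this
  exact (le_abs_self _).trans this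

open Nat in
theorem exists_sqrt_det_weighted_gram_le [DecidableEq n] (A : Matrix m n ℝ) :
    ∃ D ≥ 0, ∀ w : m → ℝ, (∀ i, 0 ≤ w i) →
      √(det (of fun r c => ∑ i, w i * A i r * A i c)) ≤ D * exp ((∑ i, w i) / 4) := by
  obtain ⟨K, hK⟩ := Finite.exists_le fun irc : m × n × n => |A irc.1 irc.2.1 * A irc.1 irc.2.2|
  set N := Fintype.card n
  refine ⟨√((N ! : ℝ) * (max K 0) ^ N * (N ! * 2 ^ N)), by positivity, fun w hw => ?_⟩
  set T := ∑ i, w i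
  have hT : 0 ≤ T := Finset.sum_nonneg fun i _ => hw i
  have hdet := det_weighted_gram_le (K := max K 0)
    (fun i r c => le_max_of_le_left (hK (i, r, c))) hw
  have hTN : T ^ N ≤ N ! * 2 ^ N * exp (T / 2) := by
    simpa [div_eq_mul_inv, mul_comm] using
      pow_le_factorial_div_pow_mul_exp N (c := 1 / 2) (by norm_num) hT
  have hexp : exp (T / 2) = exp (T / 4) ^ 2 := by rw [← exp_nat_mul]; ring_nf
  calc √(det (of fun r c => ∑ i, w i * A i r * A i c))
      ≤ √((N ! : ℝ) * (max K 0) ^ N * (N ! * 2 ^ N) * exp (T / 4) ^ 2) := by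
        gcongr
        calc _ ≤ (N ! : ℝ) * (max K 0 * T) ^ N := hdet
          _ = N ! * max K 0 ^ N * T ^ N := by ring
          _ ≤ N ! * max K 0 ^ N * (N ! * 2 ^ N * exp (T / 2)) := by gcongr
          _ = _ := by rw [hexp]; ring
    _ = _ := by rw [sqrt_mul (by positivity), sqrt_sq (by positivity)]

open Nat in
theorem exists_poisson_likelihood_mul_sqrt_det_le [DecidableEq n] {A : Matrix m n ℝ}
    (hA : LinearMap.ker A.mulVecLin = ⊥) (a0 : m → ℝ) {x : m → ℕ} (hx : ∀ i, 1 ≤ x i) :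
    ∃ ε > 0, ∃ C, ∀ β : n → ℝ,
      (∏ i, exp (-exp (a0 i + (A *ᵥ β) i)) * exp (a0 i + (A *ᵥ β) i) ^ x i / (x i)!) *
        √(det (of fun r c => ∑ i, exp (a0 i + (A *ᵥ β) i) * A i r * A i c)) ≤
      C * exp (-(ε * ‖β‖)) := by
  obtain ⟨ε, hε, hcoer⟩ := A.exists_pos_mul_norm_le_sum_abs_add hA a0
  obtain ⟨D, hD, hdet⟩ := A.exists_sqrt_det_weighted_gram_le
  refine ⟨ε, hε, D * (∏ i, 2 ^ (x i - 1) * exp 8) * exp (∑ i, |a0 i|), fun β => ?_⟩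
  set l := fun i => a0 i + (A *ᵥ β) i
  calc (∏ i, exp (-exp (l i)) * exp (l i) ^ x i / (x i)!) *
        √(det (of fun r c => ∑ i, exp (l i) * A i r * A i c))
      ≤ (∏ i, exp (-exp (l i)) * exp (l i) ^ x i / (x i)!) *
          (D * exp ((∑ i, exp (l i)) / 4)) := by
        gcongr; exact hdet _ fun i => (exp_pos _).le
    _ = D * ∏ i, exp (-exp (l i)) * exp (l i) ^ x i / (x i)! * exp (exp (l i) / 4) := by
        rw [Finset.sum_div, exp_sum, Finset.prod_mul_distrib]; ring
    _ ≤ D * ∏ i, 2 ^ (x i - 1) * exp 8 * exp (-|l i|) := by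
        exact mul_le_mul_of_nonneg_left (Finset.prod_le_prod (fun i _ => by positivity)
          fun i _ => poisson_pmf_exp_mul_exp_div_four_le (l i) (hx i)) hD
    _ = D * (∏ i, 2 ^ (x i - 1) * exp 8) * exp (-∑ i, |l i|) := by
        rw [Finset.prod_mul_distrib, ← exp_sum, Finset.sum_neg_distrib, mul_assoc]
    _ ≤ D * (∏ i, 2 ^ (x i - 1) * exp 8) * exp (∑ i, |a0 i| + -(ε * ‖β‖)) := by
        gcongr; linarith [hcoer β]
    _ = _ := by rw [exp_add]; ring

end Matrix

theorem zip_regression_marginal_finite_modified_jeffreys_general (n q k : ℕ)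
    (a : Fin n → Fin q → ℝ) (a0 : Fin n → ℝ) (x : Fin n → ℕ)
    (hx1 : ∀ i : Fin n, k ≤ (i : ℕ) → 1 ≤ x i)
    (hrank : (Matrix.of fun (i : {i : Fin n // k ≤ (i : ℕ)}) (j : Fin q) =>
      a i.1 j).rank = q) :
    (∫⁻ β : Fin q → ℝ, ∫⁻ p in Set.Ioc (0 : ℝ) 1,
        ENNReal.ofReal (
          (∏ i ∈ Finset.univ.filter (fun i : Fin n => (i : ℕ) < k),
            (p + (1 - p) * Real.exp (-(Real.exp (a0 i + ∑ r, a i r * β r))))) *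
          (1 - p) ^ (n - k) *
          (∏ i ∈ Finset.univ.filter (fun i : Fin n => k ≤ (i : ℕ)),
            Real.exp (-(Real.exp (a0 i + ∑ r, a i r * β r))) *
              Real.exp (a0 i + ∑ r, a i r * β r) ^ (x i) /
                ((x i).factorial : ℝ)) *
          Real.sqrt (Matrix.det (Matrix.of fun r c : Fin q =>
            ∑ i ∈ Finset.univ.filter (fun i : Fin n => k ≤ (i : ℕ)),
              Real.exp (a0 i + ∑ r', a i r' * β r') * a i r * a i c)))) ≠ ⊤ := by
  obtain ⟨ε, hε, C, hC⟩ := Matrix.exists_poisson_likelihood_mul_sqrt_det_le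
    (Matrix.ker_mulVecLin_eq_bot_of_rank_eq (hrank.trans (Fintype.card_fin q).symm))
    (fun i => a0 i.1) (x := fun i => x i.1) fun i => hx1 i.1 i.2
  refine ne_top_of_le_ne_top
    ((integrable_exp_neg_mul_norm volume hε).const_mul C).lintegral_lt_top.ne
    (lintegral_mono fun β => ?_)
  refine (setLIntegral_mono (g := fun _ => ENNReal.ofReal (C * exp (-(ε * ‖β‖)))) measurable_const
    fun p hp => ENNReal.ofReal_le_ofReal ?_).trans (by simp [Real.volume_Ioc])
  replace hp := Ioc_subset_Icc_self hp
  have hzero i := zero_inflated_zero_prob_mem_Icc hp _ (exp_pos (a0 i + ∑ r, a i r * β r)).le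
  have hzeros := Finset.prod_le_one (s := Finset.univ.filter (fun i : Fin n => (i : ℕ) < k))
    (fun i _ => (hzero i).1) (fun i _ => (hzero i).2)
  have hsurv : (1 - p) ^ (n - k) ∈ Icc 0 1 :=
    ⟨pow_nonneg (by linarith [hp.2]) _, pow_le_one₀ (by linarith [hp.2]) (by linarith [hp.1])⟩
  rw [mul_assoc (_ * _)]
  refine (mul_le_of_le_one_left (by positivity) (mul_le_one₀ hzeros hsurv.1 hsurv.2)).trans ?_
  refine (le_of_eq ?_).trans (hC β)
  congr 1
  · exact Finset.prod_subtype _ (fun i => by simp) _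
  · congr 3
    ext r c
    exact Finset.sum_subtype _ (fun i => by simp) _

/-- (Theorem 4.2, modified Jeffreys prior case) In the ZIP log-linear regression
model with `λᵢ(β) = exp(a₀ᵢ + aᵢᵀβ)`, zero counts at indices `i < k` and positive
counts at indices `i ≥ k`, if the submatrix `A₊` of the design matrix corresponding
to the positive counts has rank `q`, then the marginal density under the modified
Jeffreys prior `π₁ᴿ(β) = det(Σ_{i=k+1}^n λᵢ(β) aᵢ aᵢᵀ)^{1/2}` and an independent
uniform prior on `p` is finite. -/
theorem zip_regression_marginal_finite_modified_jeffreys (n q k : ℕ) (hq : 1 ≤ q)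
    (hk : k < n)
    (a : Fin n → Fin q → ℝ) (a0 : Fin n → ℝ) (x : Fin n → ℕ)
    (hx0 : ∀ i : Fin n, (i : ℕ) < k → x i = 0)
    (hx1 : ∀ i : Fin n, k ≤ (i : ℕ) → 1 ≤ x i)
    (hrank : (Matrix.of fun (i : {i : Fin n // k ≤ (i : ℕ)}) (j : Fin q) =>
      a i.1 j).rank = q) :
    (∫⁻ β : Fin q → ℝ, ∫⁻ p in Set.Ioc (0 : ℝ) 1,
        ENNReal.ofReal (
          (∏ i ∈ Finset.univ.filter (fun i : Fin n => (i : ℕ) < k),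
            (p + (1 - p) * Real.exp (-(Real.exp (a0 i + ∑ r, a i r * β r))))) *
          (1 - p) ^ (n - k) *
          (∏ i ∈ Finset.univ.filter (fun i : Fin n => k ≤ (i : ℕ)),
            Real.exp (-(Real.exp (a0 i + ∑ r, a i r * β r))) *
              Real.exp (a0 i + ∑ r, a i r * β r) ^ (x i) /
                ((x i).factorial : ℝ)) *
          Real.sqrt (Matrix.det (Matrix.of fun r c : Fin q =>
            ∑ i ∈ Finset.univ.filter (fun i : Fin n => k ≤ (i : ℕ)),
              Real.exp (a0 i + ∑ r', a i r' * β r') * a i r * a i c)))) ≠ ⊤ :=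
  zip_regression_marginal_finite_modified_jeffreys_general n q k a a0 x hx1 hrank
end

section
/- (Remark 4.1) Let n = 3, q = 2, with zero offsets, covariate vectors a₁ = (c₁, c₂)ᵀ, a₂ = (1, 0)ᵀ, a₃ = (0, 1)ᵀ where c₁ ≠ 0, so that λ₂ = e^{β₁}, λ₃ = e^{β₂}, λ₁ = λ₂^{c₁} λ₃^{c₂}. Let x₁ = 0 and x₂, x₃ ∈ ℕ. If x₂ ≤ −c₁/2 or x₃ ≤ −(1 + c₂)/2, then ∫_{ℝ²} e^{−λ₂} λ₂^{x₂} e^{−λ₃} λ₃^{x₃} · det(Σ_{i=1}^3 λᵢ aᵢ aᵢᵀ)^{1/2} dβ = ∞; hence the ZIP-regression marginal density under the full Jeffreys prior π₀ᴿ(β) = det(Σ_{i=1}^3 λᵢ aᵢ aᵢᵀ)^{1/2} is infinite. In particular, det(Σ_{i=1}^3 λᵢ aᵢ aᵢᵀ) = λ₂λ₃ + c₁² λ₂^{c₁} λ₃^{c₂+1} + c₂² λ₂^{c₁+1} λ₃^{c₂}. -/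
/-!
Since `λ₁ = e^{c₁β₁ + c₂β₂}`, the determinant is `λ₂λ₃ + c₁²λ₁λ₃ + c₂²λ₁λ₂ ≥ c₁²λ₁λ₃`, so the
integrand is at least `|c₁| · w_{x₂ + c₁/2}(β₁) · w_{x₃ + (1 + c₂)/2}(β₂)`, where
`w_α(t) = e^{-eᵗ} e^{αt}` is `e^{-λ} λ^α` in the variable `t = log λ`. By Tonelli this lower bound
integrates to `|c₁| (∫ w_{α₁}) (∫ w_{α₂})`. Each factor is positive, and it is infinite as soon as
`α ≤ 0`, because then `w_α ≥ e^{-1}` on the half-line `t ≤ 0`.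
-/

open MeasureTheory Real Set
open scoped ENNReal

noncomputable section

def logPoissonWeight (α t : ℝ) : ℝ := exp (-exp t) * exp (α * t)

lemma logPoissonWeight_pos (α t : ℝ) : 0 < logPoissonWeight α t := by
  unfold logPoissonWeight; positivity

lemma measurable_logPoissonWeight (α : ℝ) : Measurable (logPoissonWeight α) :=
  measurable_exp.neg.exp.mul (measurable_id.const_mul α).exp

lemma exp_neg_one_le_logPoissonWeight {α t : ℝ} (hα : α ≤ 0) (ht : t ≤ 0) :
    exp (-1) ≤ logPoissonWeight α t := by
  have h_exp : exp (-1) ≤ exp (-exp t) := exp_le_exp.mpr (neg_le_neg (exp_le_one_iff.mpr ht))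
  have h_pow : 1 ≤ exp (α * t) := one_le_exp (mul_nonneg_of_nonpos_of_nonpos hα ht)
  calc exp (-1) = exp (-1) * 1 := (mul_one _).symm
    _ ≤ logPoissonWeight α t := mul_le_mul h_exp h_pow zero_le_one (exp_pos _).le

lemma lintegral_logPoissonWeight_eq_top {α : ℝ} (hα : α ≤ 0) :
    ∫⁻ t, ENNReal.ofReal (logPoissonWeight α t) = ∞ := by
  refine eq_top_iff.mpr ?_
  calc ∞ = ∫⁻ _ in Iic (0 : ℝ), ENNReal.ofReal (exp (-1)) := by
        rw [setLIntegral_const, volume_Iic, ENNReal.mul_top]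
        exact ENNReal.ofReal_ne_zero_iff.mpr (exp_pos _)
    _ ≤ ∫⁻ t in Iic (0 : ℝ), ENNReal.ofReal (logPoissonWeight α t) :=
        setLIntegral_mono' measurableSet_Iic fun t ht =>
          ENNReal.ofReal_le_ofReal (exp_neg_one_le_logPoissonWeight hα ht)
    _ ≤ ∫⁻ t, ENNReal.ofReal (logPoissonWeight α t) := setLIntegral_le_lintegral _ _

lemma lintegral_logPoissonWeight_ne_zero (α : ℝ) :
    ∫⁻ t, ENNReal.ofReal (logPoissonWeight α t) ≠ 0 := by
  have h_support : Function.support (fun t => ENNReal.ofReal (logPoissonWeight α t)) = univ :=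
    Function.support_eq_univ fun t => ENNReal.ofReal_ne_zero_iff.mpr (logPoissonWeight_pos α t)
  refine ((lintegral_pos_iff_support (measurable_logPoissonWeight α).ennreal_ofReal).mpr ?_).ne'
  simp [h_support]

lemma lintegral_logPoissonWeight_mul_eq_top {α₁ α₂ : ℝ} (hα : α₁ ≤ 0 ∨ α₂ ≤ 0) :
    ∫⁻ β : ℝ × ℝ, ENNReal.ofReal (logPoissonWeight α₁ β.1) *
      ENNReal.ofReal (logPoissonWeight α₂ β.2) = ∞ := by
  rw [Measure.volume_eq_prod, lintegral_prod_mul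
    (measurable_logPoissonWeight α₁).ennreal_ofReal.aemeasurable
    (measurable_logPoissonWeight α₂).ennreal_ofReal.aemeasurable, ENNReal.mul_eq_top]
  rcases hα with hα₁ | hα₂
  · exact .inr ⟨lintegral_logPoissonWeight_eq_top hα₁, lintegral_logPoissonWeight_ne_zero α₂⟩
  · exact .inl ⟨lintegral_logPoissonWeight_ne_zero α₁, lintegral_logPoissonWeight_eq_top hα₂⟩

/-- `Σᵢ λᵢ aᵢ aᵢᵀ` for `a₁ = (c₁, c₂)`, `a₂ = (1, 0)`, `a₃ = (0, 1)` and `λᵢ = exp (aᵢᵀβ)`. -/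
def poissonFisherMatrix (c1 c2 : ℝ) (β : ℝ × ℝ) : Matrix (Fin 2) (Fin 2) ℝ :=
  Matrix.of fun r c : Fin 2 =>
    exp (c1 * β.1 + c2 * β.2) * (![c1, c2] r) * (![c1, c2] c) +
    exp β.1 * (![(1 : ℝ), 0] r) * (![(1 : ℝ), 0] c) +
    exp β.2 * (![(0 : ℝ), 1] r) * (![(0 : ℝ), 1] c)

lemma det_poissonFisherMatrix (c1 c2 : ℝ) (β : ℝ × ℝ) :
    (poissonFisherMatrix c1 c2 β).det =
      exp β.1 * exp β.2 + c1 ^ 2 * exp β.1 ^ c1 * exp β.2 ^ (c2 + 1) +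
        c2 ^ 2 * exp β.1 ^ (c1 + 1) * exp β.2 ^ c2 := by
  simp only [poissonFisherMatrix, Matrix.det_fin_two, Matrix.of_apply, Matrix.cons_val_zero,
    Matrix.cons_val_one, ← exp_mul, mul_add, mul_one, exp_add]
  ring_nf

lemma abs_mul_exp_le_sqrt_det_poissonFisherMatrix (c1 c2 : ℝ) (β : ℝ × ℝ) :
    |c1| * exp (c1 / 2 * β.1 + (1 + c2) / 2 * β.2) ≤ √(poissonFisherMatrix c1 c2 β).det := by
  have h_sqrt : |c1| * exp (c1 / 2 * β.1 + (1 + c2) / 2 * β.2) =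
      √(c1 ^ 2 * exp (c1 * β.1 + (1 + c2) * β.2)) := by
    rw [sqrt_mul (sq_nonneg c1), sqrt_sq_eq_abs, ← exp_half]
    ring_nf
  rw [h_sqrt, det_poissonFisherMatrix]
  refine sqrt_le_sqrt ?_
  have h_middle : c1 ^ 2 * exp (c1 * β.1 + (1 + c2) * β.2) =
      c1 ^ 2 * exp β.1 ^ c1 * exp β.2 ^ (c2 + 1) := by
    rw [← exp_mul, ← exp_mul, mul_assoc, ← exp_add]
    ring_nf
  have h_first : 0 ≤ exp β.1 * exp β.2 := by positivity
  have h_last : 0 ≤ c2 ^ 2 * exp β.1 ^ (c1 + 1) * exp β.2 ^ c2 := by positivity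
  linarith

lemma logPoissonWeight_mul_le_poisson_mul_sqrt_det (c1 c2 : ℝ) (x2 x3 : ℕ) (β : ℝ × ℝ) :
    |c1| * (logPoissonWeight (x2 + c1 / 2) β.1 * logPoissonWeight (x3 + (1 + c2) / 2) β.2) ≤
      exp (-exp β.1) * exp β.1 ^ x2 * exp (-exp β.2) * exp β.2 ^ x3 *
        √(poissonFisherMatrix c1 c2 β).det := by
  have h_split : |c1| * (logPoissonWeight (x2 + c1 / 2) β.1 *
        logPoissonWeight (x3 + (1 + c2) / 2) β.2) =
      exp (-exp β.1) * exp β.1 ^ x2 * exp (-exp β.2) * exp β.2 ^ x3 *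
        (|c1| * exp (c1 / 2 * β.1 + (1 + c2) / 2 * β.2)) := by
    simp only [logPoissonWeight, ← exp_nat_mul, add_mul, exp_add]
    ring
  rw [h_split]
  gcongr
  exact abs_mul_exp_le_sqrt_det_poissonFisherMatrix c1 c2 β

end

/-- (Remark 4.1) With `n = 3`, `q = 2`, zero offsets, covariates
`a₁ = (c₁,c₂)ᵀ, a₂ = (1,0)ᵀ, a₃ = (0,1)ᵀ` (so `λ₂ = e^{β₁}`, `λ₃ = e^{β₂}`,
`λ₁ = λ₂^{c₁}λ₃^{c₂}`), zero count `x₁ = 0`, and positive-count observations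
`x₂, x₃`: we have
`det(Σᵢ λᵢaᵢaᵢᵀ) = λ₂λ₃ + c₁²λ₂^{c₁}λ₃^{c₂+1} + c₂²λ₂^{c₁+1}λ₃^{c₂}`, and if
`x₂ ≤ −c₁/2` or `x₃ ≤ −(1+c₂)/2` then the marginal density of the ZIP regression
model under the full Jeffreys prior is infinite. -/
theorem zip_regression_jeffreys_marginal_infinite (c1 c2 : ℝ) (hc1 : c1 ≠ 0)
    (x2 x3 : ℕ) (hx : (x2 : ℝ) ≤ -c1 / 2 ∨ (x3 : ℝ) ≤ -(1 + c2) / 2) :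
    (∀ β : ℝ × ℝ,
      Matrix.det (Matrix.of fun r c : Fin 2 =>
          Real.exp (c1 * β.1 + c2 * β.2) * (![c1, c2] r) * (![c1, c2] c) +
          Real.exp β.1 * (![(1 : ℝ), 0] r) * (![(1 : ℝ), 0] c) +
          Real.exp β.2 * (![(0 : ℝ), 1] r) * (![(0 : ℝ), 1] c)) =
        Real.exp β.1 * Real.exp β.2 +
          c1 ^ 2 * Real.exp β.1 ^ c1 * Real.exp β.2 ^ (c2 + 1) +
          c2 ^ 2 * Real.exp β.1 ^ (c1 + 1) * Real.exp β.2 ^ c2) ∧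
    (∫⁻ β : ℝ × ℝ,
        ENNReal.ofReal (Real.exp (-(Real.exp β.1)) * Real.exp β.1 ^ x2 *
          Real.exp (-(Real.exp β.2)) * Real.exp β.2 ^ x3 *
          Real.sqrt (Matrix.det (Matrix.of fun r c : Fin 2 =>
            Real.exp (c1 * β.1 + c2 * β.2) * (![c1, c2] r) * (![c1, c2] c) +
            Real.exp β.1 * (![(1 : ℝ), 0] r) * (![(1 : ℝ), 0] c) +
            Real.exp β.2 * (![(0 : ℝ), 1] r) * (![(0 : ℝ), 1] c))))) = ⊤ := by
  refine ⟨det_poissonFisherMatrix c1 c2, eq_top_iff.mpr ?_⟩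
  have h_exponents : (x2 + c1 / 2 : ℝ) ≤ 0 ∨ (x3 + (1 + c2) / 2 : ℝ) ≤ 0 := by
    rcases hx with h | h
    exacts [.inl (by linarith), .inr (by linarith)]
  calc ∞ = ENNReal.ofReal |c1| * ∫⁻ β : ℝ × ℝ,
        ENNReal.ofReal (logPoissonWeight (x2 + c1 / 2) β.1) *
          ENNReal.ofReal (logPoissonWeight (x3 + (1 + c2) / 2) β.2) := by
        rw [lintegral_logPoissonWeight_mul_eq_top h_exponents, ENNReal.mul_top]
        exact ENNReal.ofReal_ne_zero_iff.mpr (abs_pos.mpr hc1)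
    _ ≤ _ := by
        rw [← lintegral_const_mul' _ _ ENNReal.ofReal_ne_top]
        refine lintegral_mono fun β => ?_
        rw [← ENNReal.ofReal_mul (logPoissonWeight_pos _ _).le, ← ENNReal.ofReal_mul (abs_nonneg c1)]
        exact ENNReal.ofReal_le_ofReal (logPoissonWeight_mul_le_poisson_mul_sqrt_det c1 c2 x2 x3 β)
end

section
/- Let n ≥ 1 and take a = b = 1, i.e., the Exponential(1) prior e^{−λ} for λ. Then the Bayes factor for the all-zero sample is B₁₀(0⃗) = [∫₀^1 ∫₀^∞ (p + (1−p)e^{−λ})^n e^{−λ} dλ dp] / [∫₀^∞ e^{−(n+1)λ} dλ] = Σ_{j=0}^{n} 1/(j+1), and B₁₀(0⃗)/log(n+1) → 1 as n → ∞. -/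
open MeasureTheory Real Set Filter Topology
open scoped ENNReal

/-!
The substitution `u = e^{-λ}` turns an integral over `λ ∈ (0, ∞)` against `e^{-λ} dλ` into an
integral over `u ∈ (0, 1)`. There the ZIP integrand becomes `(p + (1 - p) u)^n`, whose integral is
`(1 + p + ⋯ + p^n) / (n + 1)`, and the Poisson integrand is its case `p = 0`, with integral
`1 / (n + 1)`. Integrating the geometric sum over `p ∈ (0, 1)` gives the harmonic number `H_{n+1}`,
and `H_n - log n → γ` gives the asymptotics.
-/

theorem image_exp_neg_Ioi_zero : (fun l : ℝ => exp (-l)) '' Ioi 0 = Ioo 0 1 := by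
  rw [← image_image exp Neg.neg, image_neg_Ioi, neg_zero, image_exp_Iio, exp_zero]

theorem lintegral_Ioi_ofReal_exp_neg_mul_comp (g : ℝ → ℝ≥0∞) :
    ∫⁻ l in Ioi 0, ENNReal.ofReal (exp (-l)) * g (exp (-l)) = ∫⁻ u in Ioo 0 1, g u := by
  rw [← image_exp_neg_Ioi_zero, lintegral_image_eq_lintegral_abs_deriv_mul measurableSet_Ioi
    (fun l _ => (hasDerivAt_neg l).exp.hasDerivWithinAt) (exp_injective.comp neg_injective).injOn]
  simp [abs_of_pos (exp_pos _)]

theorem lintegral_Ioo_ofReal_eq_ofReal_intervalIntegral {f : ℝ → ℝ} {a b : ℝ} (hab : a ≤ b)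
    (hf : ContinuousOn f (Icc a b)) (hf₀ : ∀ x ∈ Ioo a b, 0 ≤ f x) :
    ∫⁻ x in Ioo a b, ENNReal.ofReal (f x) = ENNReal.ofReal (∫ x in a..b, f x) := by
  rw [intervalIntegral.integral_of_le hab, integral_Ioc_eq_integral_Ioo,
    ofReal_integral_eq_lintegral_ofReal ((hf.integrableOn_Icc).mono_set Ioo_subset_Icc_self)
      ((ae_restrict_iff' measurableSet_Ioo).2 (Eventually.of_forall hf₀))]

theorem integral_add_one_sub_mul_pow {p : ℝ} (hp : p ≠ 1) (n : ℕ) :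
    ∫ u in (0 : ℝ)..1, (p + (1 - p) * u) ^ n = (∑ j ∈ Finset.range (n + 1), p ^ j) / (n + 1) := by
  have h : 1 - p ≠ 0 := sub_ne_zero.2 hp.symm
  simp_rw [add_comm p]
  rw [intervalIntegral.integral_comp_mul_add (fun x => x ^ n) h, integral_pow, geom_sum_eq hp]
  simp only [mul_zero, zero_add, mul_one, sub_add_cancel, one_pow, smul_eq_mul]
  field_simp
  ring

theorem integral_geom_sum (n : ℕ) :
    ∫ p in (0 : ℝ)..1, ∑ j ∈ Finset.range n, p ^ j = ∑ j ∈ Finset.range n, 1 / ((j : ℝ) + 1) := by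
  rw [intervalIntegral.integral_finsetSum fun j _ => intervalIntegral.intervalIntegrable_pow j]
  simp [integral_pow]

theorem lintegral_Ioi_add_one_sub_mul_exp_neg_pow_mul_exp_neg {p : ℝ} (hp : p ∈ Ico 0 1)
    (n : ℕ) :
    ∫⁻ l in Ioi 0, ENNReal.ofReal ((p + (1 - p) * exp (-l)) ^ n * exp (-l)) =
      ENNReal.ofReal ((∑ j ∈ Finset.range (n + 1), p ^ j) / (n + 1)) := by
  simp_rw [ENNReal.ofReal_mul' (exp_pos _).le, mul_comm _ (ENNReal.ofReal (exp _))]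
  rw [lintegral_Ioi_ofReal_exp_neg_mul_comp fun u => ENNReal.ofReal ((p + (1 - p) * u) ^ n),
    lintegral_Ioo_ofReal_eq_ofReal_intervalIntegral zero_le_one (by fun_prop)
      (fun u hu => pow_nonneg (by nlinarith [hp.1, hp.2, hu.1]) n),
    integral_add_one_sub_mul_pow hp.2.ne]

theorem lintegral_Ioo_lintegral_Ioi_add_one_sub_mul_exp_neg_pow_mul_exp_neg (n : ℕ) :
    ∫⁻ p in Ioo 0 1, ∫⁻ l in Ioi 0, ENNReal.ofReal ((p + (1 - p) * exp (-l)) ^ n * exp (-l)) =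
      ENNReal.ofReal ((∑ j ∈ Finset.range (n + 1), 1 / ((j : ℝ) + 1)) / (n + 1)) := by
  rw [setLIntegral_congr_fun measurableSet_Ioo fun p hp =>
      lintegral_Ioi_add_one_sub_mul_exp_neg_pow_mul_exp_neg (Ioo_subset_Ico_self hp) n,
    lintegral_Ioo_ofReal_eq_ofReal_intervalIntegral zero_le_one (by fun_prop)
      (fun p hp => div_nonneg (Finset.sum_nonneg fun j _ => pow_nonneg hp.1.le j) (by positivity)),
    intervalIntegral.integral_div, integral_geom_sum]

theorem lintegral_Ioi_ofReal_exp_neg_natCast_add_one_mul (n : ℕ) :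
    ∫⁻ l in Ioi 0, ENNReal.ofReal (exp (-((n : ℝ) + 1) * l)) = ENNReal.ofReal (1 / (n + 1)) := by
  have h := lintegral_Ioi_add_one_sub_mul_exp_neg_pow_mul_exp_neg (left_mem_Ico.2 zero_lt_one) n
  simp_rw [zero_add, sub_zero, one_mul, ← exp_nat_mul, ← exp_add] at h
  simpa [add_mul, add_comm] using h

theorem sum_range_one_div_natCast_add_one (n : ℕ) :
    ∑ j ∈ Finset.range n, 1 / ((j : ℝ) + 1) = harmonic n := by
  simp [harmonic]

theorem tendsto_harmonic_div_log : Tendsto (fun n : ℕ => (harmonic n : ℝ) / log n) atTop (𝓝 1) := by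
  have h := tendsto_harmonic_sub_log.div_atTop (tendsto_log_atTop.comp tendsto_natCast_atTop_atTop)
  rw [← zero_add 1]
  refine (h.add_const 1).congr' ?_
  filter_upwards [eventually_gt_atTop 1] with n hn
  have : log n ≠ 0 := (log_pos (by exact_mod_cast hn)).ne'
  simp only [Function.comp_apply]
  field_simp
  ring

/-- For the all-zero sample of size `n`, with the `Exponential(1)` prior for `λ`
and a uniform prior for `p`, the Bayes factor of the ZIP model against the
Poisson model is `B₁₀(0⃗) = Σ_{j=0}^n 1/(j+1)`, and `B₁₀(0⃗)/log(n+1) → 1` as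
`n → ∞`. -/
theorem zip_all_zero_exponential_bayes_factor :
    (∀ n : ℕ, 1 ≤ n →
      (∫⁻ p in Set.Ioo (0 : ℝ) 1, ∫⁻ l in Set.Ioi (0 : ℝ),
          ENNReal.ofReal ((p + (1 - p) * Real.exp (-l)) ^ n * Real.exp (-l))) /
        (∫⁻ l in Set.Ioi (0 : ℝ), ENNReal.ofReal (Real.exp (-((n : ℝ) + 1) * l))) =
      ENNReal.ofReal (∑ j ∈ Finset.range (n + 1), 1 / ((j : ℝ) + 1))) ∧
    Filter.Tendsto (fun n : ℕ =>
        (∑ j ∈ Finset.range (n + 1), 1 / ((j : ℝ) + 1)) / Real.log ((n : ℝ) + 1))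
      Filter.atTop (nhds 1) := by
  refine ⟨fun n _ => ?_, ?_⟩
  · rw [lintegral_Ioo_lintegral_Ioi_add_one_sub_mul_exp_neg_pow_mul_exp_neg,
      lintegral_Ioi_ofReal_exp_neg_natCast_add_one_mul, ← ENNReal.ofReal_div_of_pos (by positivity)]
    field_simp
  · simp_rw [sum_range_one_div_natCast_add_one]
    simpa only [Function.comp_def, Nat.cast_add, Nat.cast_one] using
      tendsto_harmonic_div_log.comp (tendsto_add_atTop_nat 1)
end
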